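/- arXiv:2102.09743 — 6 statements merged into one kernel-verified Lean document; each statement's English description precedes it below -/
import Mathlib

section
/- Let f'_m : ℝ^d → ℝ (m = 1,…,M) be twice continuously differentiable, L'-smooth and μ'-strongly convex, let λ ≥ 0 and Λ ≥ 3λ/(2μ'). Define f_m(w,β_m) := Λ f'_m(M^{-1/2}w) + f'_m(β_m) + (λ/2)‖β_m − M^{-1/2}w‖² and F_MT2(w,β) := (1/M)Σ_{m=1}^M f_m(w,β_m) for w, β_m ∈ ℝ^d. Then F_MT2 is jointly (λ/(2M))-strongly convex, and each f_m is jointly convex, ((ΛL'+λ)/M)-smooth w.r.t. w and (L'+λ)-smooth w.r.t. β_m. Moreover, if f'_m = (1/n)Σ_{j=1}^n f'_{m,j} with each f'_{m,j} convex and ℒ'-smooth, then each f_{m,j}(w,β_m) := Λ f'_{m,j}(M^{-1/2}w) + f'_{m,j}(β_m) + (λ/2)‖β_m − M^{-1/2}w‖² is jointly convex, ((Λℒ'+λ)/M)-smooth w.r.t. w and (ℒ'+λ)-smooth w.r.t. β_m. -/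
open Real Finset
noncomputable section

abbrev Vec (d : ℕ) : Type := EuclideanSpace ℝ (Fin d)

/-!
Write `y = M^{-1/2} w`. Strong convexity of `F_MT2` comes from splitting `(λ/4)(‖y‖² + ‖β_m‖²)`
off each `f_m`: since `(λ/2)‖β - y‖² - (λ/4)(‖y‖² + ‖β‖²) = (λ/4)‖β - 2y‖² - (3λ/4)‖y‖²`, what
remains is `Λ (f'_m - (μ'/2)‖·‖²)(y) + (Λμ'/2 - 3λ/4)‖y‖² + f'_m(β) + (λ/4)‖β - 2y‖²`, which is
convex because `Λ ≥ 3λ/(2μ')`; averaged over `m`, the split-off terms add up to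
`(λ/(4M))‖(w, β)‖²`. The smoothness constants come from the chain rule: rescaling the argument by
`M^{-1/2}` multiplies the Lipschitz constant of a gradient by `1/M`, and `(λ/2)‖· - a‖²` has a
`λ`-Lipschitz gradient.
-/

open Set

section Convexity

variable {E F : Type*}

theorem convexOn_univ_norm_sq [NormedAddCommGroup E] [NormedSpace ℝ E] :
    ConvexOn ℝ univ (fun x : E => ‖x‖ ^ 2) :=
  convexOn_univ_norm.pow (fun _ _ => norm_nonneg _) 2

theorem ConvexOn.add_coupling [AddCommGroup E] [Module ℝ E] [NormedAddCommGroup F]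
    [NormedSpace ℝ F] {f : E → ℝ} {g : F → ℝ} (hf : ConvexOn ℝ univ f) (hg : ConvexOn ℝ univ g)
    (A : E →ₗ[ℝ] F) {κ : ℝ} (hκ : 0 ≤ κ) :
    ConvexOn ℝ univ (fun p : E × F => f p.1 + g p.2 + κ / 2 * ‖p.2 - A p.1‖ ^ 2) :=
  ((hf.comp_linearMap (LinearMap.fst ℝ E F)).add (hg.comp_linearMap (LinearMap.snd ℝ E F))).add
    ((convexOn_univ_norm_sq.comp_linearMap
      (LinearMap.snd ℝ E F - A ∘ₗ LinearMap.fst ℝ E F)).smul (by positivity))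

theorem StrongConvexOn.add_coupling_sub_norm_sq [AddCommGroup E] [Module ℝ E] [NormedAddCommGroup F]
    [InnerProductSpace ℝ F] {f g : F → ℝ} {μ c κ : ℝ} (hf : StrongConvexOn univ μ f)
    (hg : ConvexOn ℝ univ g) (A : E →ₗ[ℝ] F) (hc : 0 ≤ c) (hκ : 0 ≤ κ)
    (hcμ : 3 * κ ≤ 2 * c * μ) :
    ConvexOn ℝ univ (fun p : E × F => c * f (A p.1) + g p.2 + κ / 2 * ‖p.2 - A p.1‖ ^ 2
      - κ / 4 * (‖A p.1‖ ^ 2 + ‖p.2‖ ^ 2)) := by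
  have hf' : ConvexOn ℝ univ
      (fun y => c * (f y - μ / 2 * ‖y‖ ^ 2) + (c * μ / 2 - 3 * κ / 4) * ‖y‖ ^ 2) :=
    ((strongConvexOn_iff_convex.1 hf).smul hc).add
      (convexOn_univ_norm_sq.smul (by linarith))
  refine ((hf'.comp_linearMap A).add_coupling hg ((2 : ℝ) • A)
    (by positivity : 0 ≤ κ / 2)).congr fun p _ => ?_
  simp only [Function.comp_apply, LinearMap.smul_apply, norm_sub_sq_real, real_inner_smul_right,
    norm_smul, Real.norm_ofNat, mul_pow]
  ring

theorem convexOn_sum [AddCommMonoid E] [Module ℝ E] {ι : Type*} {s : Set E} (hs : Convex ℝ s)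
    (t : Finset ι) {f : ι → E → ℝ} (hf : ∀ i ∈ t, ConvexOn ℝ s (f i)) :
    ConvexOn ℝ s (fun x => ∑ i ∈ t, f i x) := by
  classical
  induction t using Finset.induction_on with
  | empty => simpa using convexOn_const (0 : ℝ) hs
  | insert i t hi ih =>
    simp only [Finset.sum_insert hi]
    exact (hf i (mem_insert_self i t)).add (ih fun j hj => hf j (mem_insert_of_mem hj))

theorem strongConvexOn_average_blocks {ι : Type*} [Fintype ι] [Nonempty ι]
    [NormedAddCommGroup E] [InnerProductSpace ℝ E] [NormedAddCommGroup F] [InnerProductSpace ℝ F]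
    {G : ι → E → F → ℝ} {κ : ℝ} (hG : ∀ i, ConvexOn ℝ univ fun q : E × F =>
      G i q.1 q.2 - κ / 2 * (‖q.1‖ ^ 2 / Fintype.card ι + ‖q.2‖ ^ 2)) :
    StrongConvexOn univ (κ / Fintype.card ι) fun p : WithLp 2 (E × PiLp 2 fun _ : ι => F) =>
      1 / (Fintype.card ι : ℝ) * ∑ i, G i p.ofLp.1 (p.ofLp.2 i) := by
  set N : ℝ := (Fintype.card ι : ℝ)
  have hN : N ≠ 0 := by simp [N]
  let block (i : ι) : WithLp 2 (E × PiLp 2 fun _ : ι => F) →ₗ[ℝ] E × F :=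
    { toFun := fun p => (p.ofLp.1, p.ofLp.2 i), map_add' := fun _ _ => rfl,
      map_smul' := fun _ _ => rfl }
  have block_apply (i : ι) (p) : block i p = (p.ofLp.1, p.ofLp.2 i) := rfl
  refine strongConvexOn_iff_convex.2 <| (convexOn_sum convex_univ Finset.univ fun i _ =>
    ((hG i).comp_linearMap (block i)).smul (by positivity : 0 ≤ 1 / N)).congr fun p _ => ?_
  simp only [Function.comp_apply, smul_eq_mul, block_apply, WithLp.prod_norm_sq_eq_of_L2,
    PiLp.norm_sq_eq_of_L2, WithLp.ofLp_fst, WithLp.ofLp_snd, ← mul_sum, sum_sub_distrib,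
    sum_add_distrib, sum_const, card_univ, nsmul_eq_mul]
  field_simp
  ring

end Convexity

section Smoothness

variable {E : Type*} [NormedAddCommGroup E] [InnerProductSpace ℝ E] [CompleteSpace E]
  {f g : E → ℝ} {L K : ℝ}

def HasLipschitzGradient (L : ℝ) (f : E → ℝ) : Prop :=
  ∀ x y, ‖gradient f x - gradient f y‖ ≤ L * ‖x - y‖

theorem hasLipschitzGradient_iff_fderiv :
    HasLipschitzGradient L f ↔ ∀ x y, ‖fderiv ℝ f x - fderiv ℝ f y‖ ≤ L * ‖x - y‖ := by
  simp only [HasLipschitzGradient, ← toDual_gradient, ← map_sub, LinearIsometryEquiv.norm_map]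

namespace HasLipschitzGradient

theorem mono (hf : HasLipschitzGradient L f) (hLK : L ≤ K) : HasLipschitzGradient K f :=
  fun x y => (hf x y).trans (by gcongr)

theorem add (hf' : Differentiable ℝ f) (hg' : Differentiable ℝ g) (hf : HasLipschitzGradient L f)
    (hg : HasLipschitzGradient K g) : HasLipschitzGradient (L + K) (fun x => f x + g x) := by
  rw [hasLipschitzGradient_iff_fderiv] at *
  intro x y
  rw [fderiv_fun_add (hf' x) (hg' x), fderiv_fun_add (hf' y) (hg' y), add_sub_add_comm, add_mul]
  exact (norm_add_le _ _).trans (add_le_add (hf x y) (hg x y))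

theorem add_const (hf : HasLipschitzGradient L f) (C : ℝ) :
    HasLipschitzGradient L (fun x => f x + C) := by
  simpa only [hasLipschitzGradient_iff_fderiv, fderiv_add_const] using hf

theorem const_add (hf : HasLipschitzGradient L f) (C : ℝ) :
    HasLipschitzGradient L (fun x => C + f x) := by
  simpa only [hasLipschitzGradient_iff_fderiv, fderiv_const_add] using hf

theorem const_mul (hf' : Differentiable ℝ f) (hf : HasLipschitzGradient L f) {c : ℝ}
    (hc : 0 ≤ c) : HasLipschitzGradient (c * L) (fun x => c * f x) := by
  rw [hasLipschitzGradient_iff_fderiv] at *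
  intro x y
  rw [fderiv_const_mul (hf' x), fderiv_const_mul (hf' y), ← smul_sub, norm_smul,
    Real.norm_of_nonneg hc, mul_assoc]
  exact mul_le_mul_of_nonneg_left (hf x y) hc

theorem comp_smul (hf : HasLipschitzGradient L f) (t : ℝ) :
    HasLipschitzGradient (t ^ 2 * L) (fun x => f (t • x)) := by
  rw [hasLipschitzGradient_iff_fderiv] at *
  intro x y
  have h := hf (t • x) (t • y)
  rw [← smul_sub, norm_smul] at h
  rw [fderiv_comp_smul, fderiv_comp_smul, ← smul_sub, norm_smul]
  calc ‖t‖ * ‖fderiv ℝ f (t • x) - fderiv ℝ f (t • y)‖ ≤ ‖t‖ * (L * (‖t‖ * ‖x - y‖)) :=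
        mul_le_mul_of_nonneg_left h (norm_nonneg t)
    _ = t ^ 2 * L * ‖x - y‖ := by rw [Real.norm_eq_abs, ← sq_abs t]; ring

theorem comp_sub_const (hf : HasLipschitzGradient L f) (a : E) :
    HasLipschitzGradient L (fun x => f (x - a)) := by
  rw [hasLipschitzGradient_iff_fderiv] at *
  intro x y
  simpa only [fderiv_comp_sub, sub_sub_sub_cancel_right] using hf (x - a) (y - a)

end HasLipschitzGradient

theorem hasLipschitzGradient_norm_sq : HasLipschitzGradient 2 (fun x : E => ‖x‖ ^ 2) := by
  rw [hasLipschitzGradient_iff_fderiv]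
  intro x y
  rw [fderiv_norm_sq_apply, fderiv_norm_sq_apply, ← smul_sub, ← map_sub,
    ← Nat.cast_smul_eq_nsmul ℝ, norm_smul, innerSL_apply_norm]
  norm_num

theorem HasLipschitzGradient.coupling_left (hf' : Differentiable ℝ f)
    (hf : HasLipschitzGradient L f) {c κ : ℝ} (hc : 0 ≤ c) (hκ : 0 ≤ κ) (t C : ℝ) (b : E) :
    HasLipschitzGradient (t ^ 2 * (c * L + κ))
      (fun x => c * f (t • x) + C + κ / 2 * ‖b - t • x‖ ^ 2) := by
  have hquad : HasLipschitzGradient (t ^ 2 * (κ / 2 * 2)) (fun x => κ / 2 * ‖b - t • x‖ ^ 2) := by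
    simp_rw [norm_sub_rev b]
    exact ((hasLipschitzGradient_norm_sq.comp_sub_const b).const_mul
      ((differentiable_id.sub_const b).norm_sq ℝ) (by positivity)).comp_smul t
  refine ((((hf.comp_smul t).const_mul (by fun_prop) hc).add_const C).add (by fun_prop)
    (((differentiable_const b).sub (differentiable_id.const_smul t)).norm_sq ℝ |>.const_mul _)
    hquad).mono (le_of_eq (by ring))

theorem HasLipschitzGradient.coupling_right (hf' : Differentiable ℝ f)
    (hf : HasLipschitzGradient L f) {κ : ℝ} (hκ : 0 ≤ κ) (C : ℝ) (a : E) :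
    HasLipschitzGradient (L + κ) (fun x => C + f x + κ / 2 * ‖x - a‖ ^ 2) :=
  ((hf.const_add C).add (by fun_prop)
    (((differentiable_id.sub_const a).norm_sq ℝ).const_mul _)
    ((hasLipschitzGradient_norm_sq.comp_sub_const a).const_mul
      ((differentiable_id.sub_const a).norm_sq ℝ) (by positivity))).mono (le_of_eq (by ring))

end Smoothness

theorem stmt0_multitask_FL_smoothness_and_strong_convexity_general
    (d M n : ℕ) (hM : 0 < M)
    (L' μ' lam Λ 𝓛' : ℝ) (hμ' : 0 < μ') (hlam : 0 ≤ lam)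
    (hΛ : 3 * lam / (2 * μ') ≤ Λ)
    (f' : Fin M → Vec d → ℝ)
    (f'j : Fin M → Fin n → Vec d → ℝ)
    (hC2 : ∀ m, ContDiff ℝ 2 (f' m))
    (hsmooth : ∀ m, ∀ x y : Vec d,
      ‖gradient (f' m) x - gradient (f' m) y‖ ≤ L' * ‖x - y‖)
    (hsc : ∀ m, ConvexOn ℝ Set.univ (fun x : Vec d => f' m x - μ' / 2 * ‖x‖ ^ 2))
    (hC2j : ∀ m j, ContDiff ℝ 2 (f'j m j))
    (hconvj : ∀ m j, ConvexOn ℝ Set.univ (f'j m j))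
    (hsmoothj : ∀ m j, ∀ x y : Vec d,
      ‖gradient (f'j m j) x - gradient (f'j m j) y‖ ≤ 𝓛' * ‖x - y‖)
    -- the personalized objectives
    (fm : Fin M → Vec d → Vec d → ℝ)
    (hfm : ∀ m (w β : Vec d), fm m w β =
      Λ * f' m ((Real.sqrt M)⁻¹ • w) + f' m β + lam / 2 * ‖β - (Real.sqrt M)⁻¹ • w‖ ^ 2)
    (fmj : Fin M → Fin n → Vec d → Vec d → ℝ)
    (hfmj : ∀ m j (w β : Vec d), fmj m j w β =
      Λ * f'j m j ((Real.sqrt M)⁻¹ • w) + f'j m j β + lam / 2 * ‖β - (Real.sqrt M)⁻¹ • w‖ ^ 2)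
    (FMT2 : WithLp 2 (Vec d × PiLp 2 fun _ : Fin M => Vec d) → ℝ)
    (hF : ∀ p, FMT2 p = (1 / (M : ℝ)) * ∑ m, fm m p.ofLp.1 (p.ofLp.2 m)) :
    -- F_MT2 is jointly (λ/(2M))-strongly convex
    (ConvexOn ℝ Set.univ fun p : WithLp 2 (Vec d × PiLp 2 fun _ : Fin M => Vec d) =>
        FMT2 p - lam / (2 * M) / 2 * ‖p‖ ^ 2)
    -- each f_m is jointly convex
    ∧ (∀ m, ConvexOn ℝ Set.univ fun p : Vec d × Vec d => fm m p.1 p.2)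
    -- f_m is ((ΛL'+λ)/M)-smooth w.r.t. w
    ∧ (∀ m (β w w' : Vec d),
        ‖gradient (fun u => fm m u β) w - gradient (fun u => fm m u β) w'‖
          ≤ (Λ * L' + lam) / M * ‖w - w'‖)
    -- f_m is (L'+λ)-smooth w.r.t. β_m
    ∧ (∀ m (w β β' : Vec d),
        ‖gradient (fun u => fm m w u) β - gradient (fun u => fm m w u) β'‖
          ≤ (L' + lam) * ‖β - β'‖)
    -- each f_{m,j} is jointly convex
    ∧ (∀ m j, ConvexOn ℝ Set.univ fun p : Vec d × Vec d => fmj m j p.1 p.2)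
    -- f_{m,j} is ((Λℒ'+λ)/M)-smooth w.r.t. w
    ∧ (∀ m j (β w w' : Vec d),
        ‖gradient (fun u => fmj m j u β) w - gradient (fun u => fmj m j u β) w'‖
          ≤ (Λ * 𝓛' + lam) / M * ‖w - w'‖)
    -- f_{m,j} is (ℒ'+λ)-smooth w.r.t. β_m
    ∧ (∀ m j (w β β' : Vec d),
        ‖gradient (fun u => fmj m j w u) β - gradient (fun u => fmj m j w u) β'‖
          ≤ (𝓛' + lam) * ‖β - β'‖) := by
  have hM0 : (0 : ℝ) < M := by exact_mod_cast hM
  have hs2 : (√M)⁻¹ ^ 2 = 1 / (M : ℝ) := by rw [inv_pow, Real.sq_sqrt hM0.le, one_div]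
  have hΛ0 : 0 ≤ Λ := le_trans (by positivity) hΛ
  have hΛμ : 3 * lam ≤ 2 * Λ * μ' := by
    have := (div_le_iff₀ (by positivity)).1 hΛ
    linarith
  have hsc' (m) : StrongConvexOn univ μ' (f' m) := strongConvexOn_iff_convex.2 (hsc m)
  have hconv (m) : ConvexOn ℝ univ (f' m) := (hsc' m).convexOn fun _ => by positivity
  have hdf (m) : Differentiable ℝ (f' m) := (hC2 m).differentiable two_ne_zero
  have hdfj (m j) : Differentiable ℝ (f'j m j) := (hC2j m j).differentiable two_ne_zero
  set A : Vec d →ₗ[ℝ] Vec d := (√M)⁻¹ • LinearMap.id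
  have : Nonempty (Fin M) := ⟨⟨0, hM⟩⟩
  have hstrong := strongConvexOn_average_blocks (G := fm) (κ := lam / 2) fun m =>
    ((hsc' m).add_coupling_sub_norm_sq (hconv m) A hΛ0 hlam hΛμ).congr fun q _ => by
      simp only [hfm, A, LinearMap.smul_apply, LinearMap.id_apply, norm_smul, mul_pow,
        Real.norm_eq_abs, sq_abs, hs2, Fintype.card_fin]
      ring
  rw [Fintype.card_fin, div_div] at hstrong
  obtain rfl : FMT2 = _ := funext hF
  obtain rfl : fm = _ := funext fun m => funext fun w => funext (hfm m w)
  obtain rfl : fmj = _ := funext fun m => funext fun j => funext fun w => funext (hfmj m j w)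
  refine ⟨strongConvexOn_iff_convex.1 hstrong, fun m => ?_, fun m β => ?_, fun m w => ?_,
    fun m j => ?_, fun m j β => ?_, fun m j w => ?_⟩
  · exact (((hconv m).comp_linearMap A).smul hΛ0).add_coupling (hconv m) A hlam
  · exact (HasLipschitzGradient.coupling_left (hdf m) (hsmooth m) hΛ0 hlam _ _ β).mono
      (le_of_eq (by rw [hs2]; ring))
  · exact HasLipschitzGradient.coupling_right (hdf m) (hsmooth m) hlam _ _
  · exact (((hconvj m j).comp_linearMap A).smul hΛ0).add_coupling (hconvj m j) A hlam
  · exact (HasLipschitzGradient.coupling_left (hdfj m j) (hsmoothj m j) hΛ0 hlam _ _ β).mono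
      (le_of_eq (by rw [hs2]; ring))
  · exact HasLipschitzGradient.coupling_right (hdfj m j) (hsmoothj m j) hlam _ _

/-- Lemma 1 of the paper, together with its finite-sum part.
Let `f'_m : ℝ^d → ℝ` be twice continuously differentiable, `L'`-smooth and `μ'`-strongly
convex, `λ ≥ 0` and `Λ ≥ 3λ/(2μ')`.  With
`f_m(w,β_m) = Λ f'_m(M^{-1/2} w) + f'_m(β_m) + (λ/2)‖β_m − M^{-1/2} w‖²` and
`F_MT2(w,β) = (1/M) ∑_m f_m(w,β_m)`, the objective `F_MT2` is jointly `(λ/(2M))`-strongly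
convex and each `f_m` is jointly convex, `((ΛL'+λ)/M)`-smooth w.r.t. `w` and `(L'+λ)`-smooth
w.r.t. `β_m`; moreover if `f'_m = (1/n) ∑_j f'_{m,j}` with each `f'_{m,j}` convex and
`ℒ'`-smooth, then each `f_{m,j}` is jointly convex, `((Λℒ'+λ)/M)`-smooth w.r.t. `w` and
`(ℒ'+λ)`-smooth w.r.t. `β_m`. -/
theorem stmt0_multitask_FL_smoothness_and_strong_convexity
    (d M n : ℕ) (hM : 0 < M) (hn : 0 < n)
    (L' μ' lam Λ 𝓛' : ℝ) (hμ' : 0 < μ') (hlam : 0 ≤ lam)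
    (hΛ : 3 * lam / (2 * μ') ≤ Λ)
    (f' : Fin M → Vec d → ℝ)
    (f'j : Fin M → Fin n → Vec d → ℝ)
    (hC2 : ∀ m, ContDiff ℝ 2 (f' m))
    (hsmooth : ∀ m, ∀ x y : Vec d,
      ‖gradient (f' m) x - gradient (f' m) y‖ ≤ L' * ‖x - y‖)
    (hsc : ∀ m, ConvexOn ℝ Set.univ (fun x : Vec d => f' m x - μ' / 2 * ‖x‖ ^ 2))
    (hsum : ∀ m x, f' m x = (1 / (n : ℝ)) * ∑ j, f'j m j x)
    (hC2j : ∀ m j, ContDiff ℝ 2 (f'j m j))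
    (hconvj : ∀ m j, ConvexOn ℝ Set.univ (f'j m j))
    (hsmoothj : ∀ m j, ∀ x y : Vec d,
      ‖gradient (f'j m j) x - gradient (f'j m j) y‖ ≤ 𝓛' * ‖x - y‖)
    -- the personalized objectives
    (fm : Fin M → Vec d → Vec d → ℝ)
    (hfm : ∀ m (w β : Vec d), fm m w β =
      Λ * f' m ((Real.sqrt M)⁻¹ • w) + f' m β + lam / 2 * ‖β - (Real.sqrt M)⁻¹ • w‖ ^ 2)
    (fmj : Fin M → Fin n → Vec d → Vec d → ℝ)
    (hfmj : ∀ m j (w β : Vec d), fmj m j w β =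
      Λ * f'j m j ((Real.sqrt M)⁻¹ • w) + f'j m j β + lam / 2 * ‖β - (Real.sqrt M)⁻¹ • w‖ ^ 2)
    (FMT2 : WithLp 2 (Vec d × PiLp 2 fun _ : Fin M => Vec d) → ℝ)
    (hF : ∀ p, FMT2 p = (1 / (M : ℝ)) * ∑ m, fm m p.ofLp.1 (p.ofLp.2 m)) :
    -- F_MT2 is jointly (λ/(2M))-strongly convex
    (ConvexOn ℝ Set.univ fun p : WithLp 2 (Vec d × PiLp 2 fun _ : Fin M => Vec d) =>
        FMT2 p - lam / (2 * M) / 2 * ‖p‖ ^ 2)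
    -- each f_m is jointly convex
    ∧ (∀ m, ConvexOn ℝ Set.univ fun p : Vec d × Vec d => fm m p.1 p.2)
    -- f_m is ((ΛL'+λ)/M)-smooth w.r.t. w
    ∧ (∀ m (β w w' : Vec d),
        ‖gradient (fun u => fm m u β) w - gradient (fun u => fm m u β) w'‖
          ≤ (Λ * L' + lam) / M * ‖w - w'‖)
    -- f_m is (L'+λ)-smooth w.r.t. β_m
    ∧ (∀ m (w β β' : Vec d),
        ‖gradient (fun u => fm m w u) β - gradient (fun u => fm m w u) β'‖
          ≤ (L' + lam) * ‖β - β'‖)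
    -- each f_{m,j} is jointly convex
    ∧ (∀ m j, ConvexOn ℝ Set.univ fun p : Vec d × Vec d => fmj m j p.1 p.2)
    -- f_{m,j} is ((Λℒ'+λ)/M)-smooth w.r.t. w
    ∧ (∀ m j (β w w' : Vec d),
        ‖gradient (fun u => fmj m j u β) w - gradient (fun u => fmj m j u β) w'‖
          ≤ (Λ * 𝓛' + lam) / M * ‖w - w'‖)
    -- f_{m,j} is (ℒ'+λ)-smooth w.r.t. β_m
    ∧ (∀ m j (w β β' : Vec d),
        ‖gradient (fun u => fmj m j w u) β - gradient (fun u => fmj m j w u) β'‖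
          ≤ (𝓛' + lam) * ‖β - β'‖) :=
  stmt0_multitask_FL_smoothness_and_strong_convexity_general d M n hM L' μ' lam Λ 𝓛' hμ' hlam hΛ f'
    f'j hC2 hsmooth hsc hC2j hconvj hsmoothj fm hfm fmj hfmj FMT2 hF
end
end

section
/- Suppose each f_m : ℝ^{d_0+d_m} → ℝ is differentiable and L-smooth. Fix points w_1,…,w_M ∈ ℝ^{d_0} and β_m ∈ ℝ^{d_m}, let w̄ := (1/M)Σ_m w_m, θ_m := (w_m, β_m), θ̂_m := (w̄, β_m). Let g_{m,1} ∈ ℝ^{d_0} and g_{m,2} ∈ ℝ^{d_m} be square-integrable random vectors with E[g_{m,1}] = ∇_w f_m(θ_m) and E[g_{m,2}] = ∇_{β_m} f_m(θ_m), let h := (1/M)Σ_m g_{m,1}, and for a stepsize η ≥ 0 define the updated points θ̂⁺_m := (w̄ − ηh, β_m − η g_{m,2}). Then E[(1/M)Σ_{m=1}^M f_m(θ̂⁺_m)] − (1/M)Σ_{m=1}^M f_m(θ̂_m) ≤ −η⟨(1/M)Σ_m ∇_w f_m(θ̂_m), (1/M)Σ_m ∇_w f_m(θ_m)⟩ − (η/M)Σ_m⟨∇_{β_m}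 f_m(θ̂_m), ∇_{β_m} f_m(θ_m)⟩ + (η²L/2)E‖h‖² + (η²L/(2M))Σ_{m=1}^M E‖g_{m,2}‖². -/
open Real Finset MeasureTheory
open scoped InnerProductSpace
noncomputable section

/-!
For an `L`-smooth `φ` the descent lemma `|φ y - φ x - ⟪∇φ x, y - x⟫| ≤ (L/2)‖y - x‖²` holds.
Applied to `(w, β_m) ↦ f_m(w, β_m)` on the `L²` product, its first-order term splits into the
two partial gradients. Being two-sided, the bound dominates `f_m(θ̂⁺_m)` by an integrable
function, so expectations may be taken; linearity and unbiasedness of `g_{m,1}`, `g_{m,2}` turn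
the first-order terms into the stated inner products, and averaging over `m` gives the claim.
-/

section Smooth

variable {E F : Type*} [NormedAddCommGroup E] [InnerProductSpace ℝ E] [CompleteSpace E]
  [NormedAddCommGroup F] [InnerProductSpace ℝ F] [CompleteSpace F]

theorem abs_sub_sub_inner_gradient_le {φ : E → ℝ} (hφ : Differentiable ℝ φ) {L : ℝ}
    (hL : ∀ u v, ‖gradient φ u - gradient φ v‖ ≤ L * ‖u - v‖) (x y : E) :
    |φ y - φ x - ⟪gradient φ x, y - x⟫_ℝ| ≤ L / 2 * ‖y - x‖ ^ 2 := by
  set v := y - x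
  have hderiv (t : ℝ) : HasDerivAt (fun s : ℝ => φ (x + s • v) - φ x - s * ⟪gradient φ x, v⟫_ℝ)
      (⟪gradient φ (x + t • v) - gradient φ x, v⟫_ℝ) t := by
    have hline : HasDerivAt (fun s : ℝ => x + s • v) v t := by
      simpa using ((hasDerivAt_id t).smul_const v).const_add x
    have := (((hφ _).hasGradientAt.hasFDerivAt.comp_hasDerivAt t hline).sub_const (φ x)).fun_sub
      ((hasDerivAt_id t).mul_const ⟪gradient φ x, v⟫_ℝ)
    simpa [inner_sub_left] using this
  have hbound := image_norm_le_of_norm_deriv_right_le_deriv_boundary (a := 0) (b := 1)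
    (fun t _ => (hderiv t).continuousAt.continuousWithinAt)
    (fun t _ => (hderiv t).hasDerivWithinAt)
    (B := fun t => L / 2 * t ^ 2 * ‖v‖ ^ 2) (by simp)
    (fun t => by simpa using ((hasDerivAt_pow 2 t).const_mul (L / 2)).mul_const (‖v‖ ^ 2))
    (fun t ht => by
      calc ‖⟪gradient φ (x + t • v) - gradient φ x, v⟫_ℝ‖
          ≤ ‖gradient φ (x + t • v) - gradient φ x‖ * ‖v‖ := norm_inner_le_norm _ _
        _ ≤ L * ‖t • v‖ * ‖v‖ := by gcongr; simpa using hL (x + t • v) x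
        _ = _ := by rw [norm_smul, Real.norm_of_nonneg ht.1]; ring)
    (Set.right_mem_Icc.2 zero_le_one)
  simpa [v] using hbound

theorem HasGradientAt.partial_fst {φ : WithLp 2 (E × F) → ℝ} {G : WithLp 2 (E × F)} {x : E}
    {y : F} (h : HasGradientAt φ G (WithLp.toLp 2 (x, y))) :
    HasGradientAt (fun x' => φ (WithLp.toLp 2 (x', y))) G.fst x := by
  have hcomp := h.hasFDerivAt.comp x
    ((WithLp.prodContinuousLinearEquiv 2 ℝ E F).symm.hasFDerivAt.comp x
      (hasFDerivAt_prodMk_left (𝕜 := ℝ) x y))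
  rw [hasGradientAt_iff_hasFDerivAt]
  refine hcomp.congr_fderiv ?_
  ext v
  simp

theorem HasGradientAt.partial_snd {φ : WithLp 2 (E × F) → ℝ} {G : WithLp 2 (E × F)} {x : E}
    {y : F} (h : HasGradientAt φ G (WithLp.toLp 2 (x, y))) :
    HasGradientAt (fun y' => φ (WithLp.toLp 2 (x, y'))) G.snd y := by
  have hcomp := h.hasFDerivAt.comp y
    ((WithLp.prodContinuousLinearEquiv 2 ℝ E F).symm.hasFDerivAt.comp y
      (hasFDerivAt_prodMk_right (𝕜 := ℝ) x y))
  rw [hasGradientAt_iff_hasFDerivAt]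
  refine hcomp.congr_fderiv ?_
  ext v
  simp

theorem abs_sub_sub_inner_partial_gradients_le (f : E → F → ℝ)
    (hf : Differentiable ℝ (fun p : WithLp 2 (E × F) => f p.ofLp.1 p.ofLp.2)) {L : ℝ}
    (hL : ∀ p q : WithLp 2 (E × F),
      ‖gradient (fun p : WithLp 2 (E × F) => f p.ofLp.1 p.ofLp.2) p
        - gradient (fun p : WithLp 2 (E × F) => f p.ofLp.1 p.ofLp.2) q‖ ≤ L * ‖p - q‖)
    (x : E) (y : F) (u : E) (v : F) :
    |f (x - u) (y - v) - f x y
        + (⟪gradient (fun x' => f x' y) x, u⟫_ℝ + ⟪gradient (fun y' => f x y') y, v⟫_ℝ)|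
      ≤ L / 2 * (‖u‖ ^ 2 + ‖v‖ ^ 2) := by
  have hG := (hf (WithLp.toLp 2 (x, y))).hasGradientAt
  have := abs_sub_sub_inner_gradient_le hf hL (WithLp.toLp 2 (x, y)) (WithLp.toLp 2 (x - u, y - v))
  rw [hG.partial_fst.gradient, hG.partial_snd.gradient]
  rw [WithLp.prod_inner_apply, WithLp.prod_norm_sq_eq_of_L2] at this
  convert this using 2
  · simp only [WithLp.ofLp_fst, WithLp.ofLp_snd, WithLp.ofLp_sub, Prod.mk_sub_mk,
      sub_sub_cancel_left, inner_neg_right]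
    ring
  · simp [WithLp.fst, WithLp.snd]

section Integral

variable {Ω : Type*} [MeasurableSpace Ω] {μ : Measure Ω}

theorem Integrable.of_abs_sub_le {Z U V : Ω → ℝ} (hZ : AEStronglyMeasurable Z μ)
    (hU : Integrable U μ) (hV : Integrable V μ) (h : ∀ ω, |Z ω - U ω| ≤ V ω) :
    Integrable Z μ := by
  have hZU : Integrable (Z - U) μ :=
    hV.mono' (hZ.sub hU.aestronglyMeasurable) (.of_forall fun ω => (Real.norm_eq_abs _).trans_le (h ω))
  simpa using hZU.add hU

theorem integral_le_add_of_abs_sub_le {Z U V : Ω → ℝ} (hZ : Integrable Z μ)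
    (hU : Integrable U μ) (hV : Integrable V μ) (h : ∀ ω, |Z ω - U ω| ≤ V ω) :
    ∫ ω, Z ω ∂μ ≤ ∫ ω, U ω ∂μ + ∫ ω, V ω ∂μ := by
  rw [← integral_add hU hV]
  exact integral_mono hZ (hU.add hV) fun ω => by linarith [(abs_le.1 (h ω)).2]

theorem integrable_and_integral_comp_sub_smul_le [IsProbabilityMeasure μ] (f : E → F → ℝ)
    (hf : Differentiable ℝ (fun p : WithLp 2 (E × F) => f p.ofLp.1 p.ofLp.2)) {L : ℝ}
    (hL : ∀ p q : WithLp 2 (E × F),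
      ‖gradient (fun p : WithLp 2 (E × F) => f p.ofLp.1 p.ofLp.2) p
        - gradient (fun p : WithLp 2 (E × F) => f p.ofLp.1 p.ofLp.2) q‖ ≤ L * ‖p - q‖)
    {X : Ω → E} {Y : Ω → F} (hX : MemLp X 2 μ) (hY : MemLp Y 2 μ) (x : E) (y : F) (η : ℝ) :
    Integrable (fun ω => f (x - η • X ω) (y - η • Y ω)) μ ∧
      ∫ ω, f (x - η • X ω) (y - η • Y ω) ∂μ
        ≤ f x y - η * ⟪gradient (fun x' => f x' y) x, ∫ ω, X ω ∂μ⟫_ℝ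
          - η * ⟪gradient (fun y' => f x y') y, ∫ ω, Y ω ∂μ⟫_ℝ
          + η ^ 2 * L / 2 * (∫ ω, ‖X ω‖ ^ 2 ∂μ + ∫ ω, ‖Y ω‖ ^ 2 ∂μ) := by
  set a := gradient (fun x' => f x' y) x
  set b := gradient (fun y' => f x y') y
  have hXi : Integrable X μ := hX.integrable one_le_two
  have hYi : Integrable Y μ := hY.integrable one_le_two
  have hX2 : Integrable (fun ω => ‖X ω‖ ^ 2) μ := hX.norm.integrable_sq
  have hY2 : Integrable (fun ω => ‖Y ω‖ ^ 2) μ := hY.norm.integrable_sq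
  set U := fun ω => f x y - (η * ⟪a, X ω⟫_ℝ + η * ⟪b, Y ω⟫_ℝ)
  set V := fun ω => L / 2 * (η ^ 2 * ‖X ω‖ ^ 2 + η ^ 2 * ‖Y ω‖ ^ 2)
  have hA : Integrable (fun ω => η * ⟪a, X ω⟫_ℝ) μ := (hXi.const_inner a).const_mul η
  have hB : Integrable (fun ω => η * ⟪b, Y ω⟫_ℝ) μ := (hYi.const_inner b).const_mul η
  have hAB : Integrable (fun ω => η * ⟪a, X ω⟫_ℝ + η * ⟪b, Y ω⟫_ℝ) μ := hA.add hB
  have hUi : Integrable U μ := (integrable_const _).sub hAB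
  have hVi : Integrable V μ := ((hX2.const_mul _).add (hY2.const_mul _)).const_mul _
  have hbound (ω : Ω) : |f (x - η • X ω) (y - η • Y ω) - U ω| ≤ V ω := by
    have := abs_sub_sub_inner_partial_gradients_le f hf hL x y (η • X ω) (η • Y ω)
    simp only [inner_smul_right, norm_smul, mul_pow, Real.norm_eq_abs, sq_abs] at this
    simpa only [U, V, ← sub_add] using this
  have hcont : Continuous fun q : E × F => f q.1 q.2 :=
    hf.continuous.comp (WithLp.prodContinuousLinearEquiv 2 ℝ E F).symm.continuous
  have hmeas : AEStronglyMeasurable (fun ω => f (x - η • X ω) (y - η • Y ω)) μ :=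
    hcont.comp_aestronglyMeasurable
      ((aestronglyMeasurable_const.sub (hXi.1.const_smul η)).prodMk
        (aestronglyMeasurable_const.sub (hYi.1.const_smul η)))
  have hint := Integrable.of_abs_sub_le hmeas hUi hVi hbound
  refine ⟨hint, (integral_le_add_of_abs_sub_le hint hUi hVi hbound).trans_eq ?_⟩
  simp only [U, V]
  rw [integral_sub (integrable_const _) hAB, integral_add hA hB, integral_const_mul,
    integral_const_mul, integral_inner hXi, integral_inner hYi, integral_const_mul, integral_add (hX2.const_mul _) (hY2.const_mul _),
    integral_const_mul, integral_const_mul]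
  simp only [integral_const, probReal_univ, smul_eq_mul, one_mul]
  ring

end Integral

end Smooth

theorem stmt12_one_step_descent_general
    (d0 M : ℕ) (hM : 0 < M) (dm : Fin M → ℕ) (L : ℝ)
    (f : (m : Fin M) → Vec d0 → Vec (dm m) → ℝ)
    (hdiff : ∀ m, Differentiable ℝ
      (fun p : WithLp 2 (Vec d0 × Vec (dm m)) => f m p.ofLp.1 p.ofLp.2))
    (hsmooth : ∀ m, ∀ u v : WithLp 2 (Vec d0 × Vec (dm m)),
      ‖gradient (fun p : WithLp 2 (Vec d0 × Vec (dm m)) => f m p.ofLp.1 p.ofLp.2) u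
        - gradient (fun p : WithLp 2 (Vec d0 × Vec (dm m)) => f m p.ofLp.1 p.ofLp.2) v‖
        ≤ L * ‖u - v‖)
    -- the fixed points
    (w_ : Fin M → Vec d0) (β : ∀ m, Vec (dm m))
    -- the probability space and stochastic gradients
    (Ω : Type) [MeasurableSpace Ω] (μpr : Measure Ω) [IsProbabilityMeasure μpr]
    (g1 : Fin M → Ω → Vec d0) (g2 : (m : Fin M) → Ω → Vec (dm m))
    (hg1L2 : ∀ m, MemLp (g1 m) 2 μpr) (hg2L2 : ∀ m, MemLp (g2 m) 2 μpr)
    (hg1mean : ∀ m, ∫ ω, g1 m ω ∂μpr = gradient (fun u => f m u (β m)) (w_ m))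
    (hg2mean : ∀ m, ∫ ω, g2 m ω ∂μpr = gradient (fun u => f m (w_ m) u) (β m))
    (η : ℝ) :
    (let wbar : Vec d0 := (M : ℝ)⁻¹ • ∑ m, w_ m;
     let h : Ω → Vec d0 := fun ω => (1 / (M : ℝ)) • ∑ m, g1 m ω;
     (∫ ω, (1 / (M : ℝ)) * ∑ m, f m (wbar - η • h ω) (β m - η • g2 m ω) ∂μpr)
         - (1 / (M : ℝ)) * ∑ m, f m wbar (β m)
       ≤ -η * ⟪(1 / (M : ℝ)) • ∑ m, gradient (fun u => f m u (β m)) wbar,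
              (1 / (M : ℝ)) • ∑ m, gradient (fun u => f m u (β m)) (w_ m)⟫_ℝ
         - (η / M) * ∑ m, ⟪gradient (fun u => f m wbar u) (β m),
              gradient (fun u => f m (w_ m) u) (β m)⟫_ℝ
         + (η ^ 2 * L / 2) * ∫ ω, ‖h ω‖ ^ 2 ∂μpr
         + (η ^ 2 * L / (2 * M)) * ∑ m, ∫ ω, ‖g2 m ω‖ ^ 2 ∂μpr) := by
  intro wbar h
  have hM' : (M : ℝ) ≠ 0 := by positivity
  have hh : MemLp h 2 μpr := (memLp_finsetSum univ fun m _ => hg1L2 m).const_smul (1 / (M : ℝ))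
  have hmean : ∫ ω, h ω ∂μpr = (1 / (M : ℝ)) • ∑ m, gradient (fun u => f m u (β m)) (w_ m) := by
    rw [integral_smul, integral_finsetSum _ fun m _ => (hg1L2 m).integrable one_le_two]
    simp only [hg1mean]
  have hstep m := integrable_and_integral_comp_sub_smul_le (f m) (hdiff m) (hsmooth m) hh
    (hg2L2 m) wbar (β m) η
  rw [integral_const_mul, integral_finsetSum _ fun m _ => (hstep m).1]
  refine (sub_le_sub_right (mul_le_mul_of_nonneg_left
    (Finset.sum_le_sum fun m _ => (hstep m).2) (by positivity)) _).trans_eq ?_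
  rw [hmean]
  simp only [hg2mean, real_inner_smul_left, sum_inner, Finset.sum_add_distrib,
    Finset.sum_sub_distrib, ← Finset.mul_sum, Finset.sum_const, Finset.card_univ,
    Fintype.card_fin, nsmul_eq_mul]
  field_simp
  ring

/-- Lemma 8 of the paper: one-step descent inequality.  If each `f_m` is
differentiable and `L`-smooth, `g_{m,1}, g_{m,2}` are square-integrable unbiased stochastic
gradients of `f_m` at `θ_m = (w_m, β_m)`, `h = (1/M)∑_m g_{m,1}`, and
`θ̂⁺_m = (w̄ − ηh, β_m − ηg_{m,2})`, then
`E[(1/M)∑_m f_m(θ̂⁺_m)] − (1/M)∑_m f_m(θ̂_m)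
  ≤ −η⟨(1/M)∑_m ∇_w f_m(θ̂_m), (1/M)∑_m ∇_w f_m(θ_m)⟩
    − (η/M)∑_m ⟨∇_{β_m} f_m(θ̂_m), ∇_{β_m} f_m(θ_m)⟩
    + (η²L/2)E‖h‖² + (η²L/(2M))∑_m E‖g_{m,2}‖²`. -/
theorem stmt12_one_step_descent
    (d0 M : ℕ) (hM : 0 < M) (dm : Fin M → ℕ) (L : ℝ)
    (f : (m : Fin M) → Vec d0 → Vec (dm m) → ℝ)
    (hdiff : ∀ m, Differentiable ℝ
      (fun p : WithLp 2 (Vec d0 × Vec (dm m)) => f m p.ofLp.1 p.ofLp.2))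
    (hsmooth : ∀ m, ∀ u v : WithLp 2 (Vec d0 × Vec (dm m)),
      ‖gradient (fun p : WithLp 2 (Vec d0 × Vec (dm m)) => f m p.ofLp.1 p.ofLp.2) u
        - gradient (fun p : WithLp 2 (Vec d0 × Vec (dm m)) => f m p.ofLp.1 p.ofLp.2) v‖
        ≤ L * ‖u - v‖)
    -- the fixed points
    (w_ : Fin M → Vec d0) (β : ∀ m, Vec (dm m))
    -- the probability space and stochastic gradients
    (Ω : Type) [MeasurableSpace Ω] (μpr : Measure Ω) [IsProbabilityMeasure μpr]
    (g1 : Fin M → Ω → Vec d0) (g2 : (m : Fin M) → Ω → Vec (dm m))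
    (hg1L2 : ∀ m, MemLp (g1 m) 2 μpr) (hg2L2 : ∀ m, MemLp (g2 m) 2 μpr)
    (hg1mean : ∀ m, ∫ ω, g1 m ω ∂μpr = gradient (fun u => f m u (β m)) (w_ m))
    (hg2mean : ∀ m, ∫ ω, g2 m ω ∂μpr = gradient (fun u => f m (w_ m) u) (β m))
    (η : ℝ) (hη : 0 ≤ η) :
    (let wbar : Vec d0 := (M : ℝ)⁻¹ • ∑ m, w_ m;
     let h : Ω → Vec d0 := fun ω => (1 / (M : ℝ)) • ∑ m, g1 m ω;
     (∫ ω, (1 / (M : ℝ)) * ∑ m, f m (wbar - η • h ω) (β m - η • g2 m ω) ∂μpr)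
         - (1 / (M : ℝ)) * ∑ m, f m wbar (β m)
       ≤ -η * ⟪(1 / (M : ℝ)) • ∑ m, gradient (fun u => f m u (β m)) wbar,
              (1 / (M : ℝ)) • ∑ m, gradient (fun u => f m u (β m)) (w_ m)⟫_ℝ
         - (η / M) * ∑ m, ⟪gradient (fun u => f m wbar u) (β m),
              gradient (fun u => f m (w_ m) u) (β m)⟫_ℝ
         + (η ^ 2 * L / 2) * ∫ ω, ‖h ω‖ ^ 2 ∂μpr
         + (η ^ 2 * L / (2 * M)) * ∑ m, ∫ ω, ‖g2 m ω‖ ^ 2 ∂μpr) :=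
  stmt12_one_step_descent_general d0 M hM dm L f hdiff hsmooth w_ β Ω μpr g1 g2 hg1L2 hg2L2 hg1mean
    hg2mean η
end
end

section
/- Suppose each f_m : ℝ^{d_0+d_m} → ℝ is differentiable and L-smooth. Fix points w_1,…,w_M ∈ ℝ^{d_0}, β_m ∈ ℝ^{d_m}, let w̄ := (1/M)Σ_m w_m, θ_m := (w_m, β_m), θ̂_m := (w̄, β_m), and V := (1/M)Σ_m‖w_m − w̄‖². Then for every η ≥ 0: −η⟨(1/M)Σ_m ∇_w f_m(θ̂_m), (1/M)Σ_m ∇_w f_m(θ_m)⟩ − (η/M)Σ_m⟨∇_{β_m} f_m(θ̂_m), ∇_{β_m} f_m(θ_m)⟩ ≤ −(η/2)‖G(θ̂)‖² − (η/2)‖G(θ)‖² + (ηL²/2)V, where G(θ) (respectively G(θ̂)) denotes the vector with w-component (1/M)Σ_m ∇_w f_m(θ_m) and β_m-components (1/M)∇_{β_m} f_m(θ_m) (respectively with θ_m replaced by θ̂_m). -/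
/-! Polarization, `⟪x, y⟫ = (‖x‖² + ‖y‖² - ‖x - y‖²) / 2`, turns each inner product on the left
into the squared norms on the right plus a defect `‖x - y‖² / 2`; for the `β`-blocks the weight
`1/M` of the inner product dominates the weight `1/M²` in `‖G‖²`. The defects are paid for by
`L`-smoothness: `θ_m` and `θ̂_m` differ only in the `w`-block, so both blocks of the gradients
differ by at most `L ‖w_m - w̄‖` in total, and by Jensen the `w`-defect of the averaged
gradients is at most the average of the per-`m` defects. -/

open Real Finset
open scoped InnerProductSpace
noncomputable section

section
variable {E H : Type*} [NormedAddCommGroup E] [InnerProductSpace ℝ E] [CompleteSpace E]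
  [NormedAddCommGroup H] [InnerProductSpace ℝ H] [CompleteSpace H]

theorem HasGradientAt.comp_hasFDerivAt_of_inner {g : H → ℝ} {e : E → H} {G : H} {G' : E}
    {ι : E →L[ℝ] H} {x : E} (hg : HasGradientAt g G (e x)) (he : HasFDerivAt e ι x)
    (hG : ∀ v, ⟪G, ι v⟫_ℝ = ⟪G', v⟫_ℝ) : HasGradientAt (fun y => g (e y)) G' x := by
  have hcomp := hg.hasFDerivAt.comp x he
  have hderiv : (InnerProductSpace.toDual ℝ H G : H →L[ℝ] ℝ).comp ι =
      InnerProductSpace.toDual ℝ E G' := by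
    ext v
    simpa using hG v
  rw [hderiv] at hcomp
  exact hasGradientAt_iff_hasFDerivAt.mpr hcomp

end

section
variable {E F : Type*} [NormedAddCommGroup E] [InnerProductSpace ℝ E] [CompleteSpace E]
  [NormedAddCommGroup F] [InnerProductSpace ℝ F] [CompleteSpace F]

theorem DifferentiableAt.hasGradientAt_fst_slice {φ : E → F → ℝ} {x : E} {y : F}
    (h : DifferentiableAt ℝ (fun p : WithLp 2 (E × F) => φ p.ofLp.1 p.ofLp.2)
      (WithLp.toLp 2 (x, y))) :
    HasGradientAt (fun u => φ u y)
      (gradient (fun p : WithLp 2 (E × F) => φ p.ofLp.1 p.ofLp.2) (WithLp.toLp 2 (x, y))).ofLp.1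
      x :=
  h.hasGradientAt.comp_hasFDerivAt_of_inner (e := fun u => WithLp.toLp 2 (u, y))
    ((WithLp.prodContinuousLinearEquiv 2 ℝ E F).symm.hasFDerivAt.comp x
      (hasFDerivAt_prodMk_left x y)) fun v => by
    rw [WithLp.prod_inner_apply]
    simp only [ContinuousLinearMap.comp_apply, ContinuousLinearMap.inl_apply,
      ContinuousLinearEquiv.coe_coe, WithLp.prodContinuousLinearEquiv_symm_apply,
      inner_zero_right, add_zero]

theorem DifferentiableAt.hasGradientAt_snd_slice {φ : E → F → ℝ} {x : E} {y : F}
    (h : DifferentiableAt ℝ (fun p : WithLp 2 (E × F) => φ p.ofLp.1 p.ofLp.2)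
      (WithLp.toLp 2 (x, y))) :
    HasGradientAt (fun v => φ x v)
      (gradient (fun p : WithLp 2 (E × F) => φ p.ofLp.1 p.ofLp.2) (WithLp.toLp 2 (x, y))).ofLp.2
      y :=
  h.hasGradientAt.comp_hasFDerivAt_of_inner (e := fun v => WithLp.toLp 2 (x, v))
    ((WithLp.prodContinuousLinearEquiv 2 ℝ E F).symm.hasFDerivAt.comp y
      (hasFDerivAt_prodMk_right x y)) fun v => by
    rw [WithLp.prod_inner_apply]
    simp only [ContinuousLinearMap.comp_apply, ContinuousLinearMap.inr_apply,
      ContinuousLinearEquiv.coe_coe, WithLp.prodContinuousLinearEquiv_symm_apply,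
      inner_zero_right, zero_add]

theorem sq_norm_partialGradient_sub_le {φ : E → F → ℝ} {L : ℝ}
    (hdiff : Differentiable ℝ (fun p : WithLp 2 (E × F) => φ p.ofLp.1 p.ofLp.2))
    (hsmooth : ∀ u v : WithLp 2 (E × F),
      ‖gradient (fun p : WithLp 2 (E × F) => φ p.ofLp.1 p.ofLp.2) u
        - gradient (fun p : WithLp 2 (E × F) => φ p.ofLp.1 p.ofLp.2) v‖ ≤ L * ‖u - v‖)
    (x x' : E) (y y' : F) :
    ‖gradient (fun u => φ u y) x - gradient (fun u => φ u y') x'‖ ^ 2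
      + ‖gradient (fun v => φ x v) y - gradient (fun v => φ x' v) y'‖ ^ 2
      ≤ L ^ 2 * (‖x - x'‖ ^ 2 + ‖y - y'‖ ^ 2) := by
  set g := fun p : WithLp 2 (E × F) => φ p.ofLp.1 p.ofLp.2
  set p := WithLp.toLp 2 (x, y)
  set q := WithLp.toLp 2 (x', y')
  rw [(hdiff p).hasGradientAt_fst_slice.gradient, (hdiff q).hasGradientAt_fst_slice.gradient,
    (hdiff p).hasGradientAt_snd_slice.gradient, (hdiff q).hasGradientAt_snd_slice.gradient]
  calc _ = ‖gradient g p - gradient g q‖ ^ 2 := (WithLp.prod_norm_sq_eq_of_L2 _).symm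
    _ ≤ (L * ‖p - q‖) ^ 2 := pow_le_pow_left₀ (norm_nonneg _) (hsmooth p q) 2
    _ = L ^ 2 * (‖x - x'‖ ^ 2 + ‖y - y'‖ ^ 2) := by
      rw [mul_pow, WithLp.prod_norm_sq_eq_of_L2]; rfl

end

section
variable {E : Type*} [NormedAddCommGroup E] [InnerProductSpace ℝ E]

theorem neg_mul_inner_le {t : ℝ} (ht₀ : 0 ≤ t) (ht₁ : t ≤ 1) (x y : E) :
    -(t * ⟪x, y⟫_ℝ) ≤ -(‖t • x‖ ^ 2 + ‖t • y‖ ^ 2) / 2 + t * ‖x - y‖ ^ 2 / 2 := by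
  rw [norm_smul, norm_smul, Real.norm_of_nonneg ht₀, norm_sub_sq_real]
  have htt : t ^ 2 ≤ t := by nlinarith
  nlinarith [mul_le_mul_of_nonneg_right htt (add_nonneg (sq_nonneg ‖x‖) (sq_nonneg ‖y‖))]

theorem sq_norm_avg_le_avg_sq_norm {ι : Type*} (s : Finset ι) (v : ι → E) :
    ‖(1 / (#s : ℝ)) • ∑ i ∈ s, v i‖ ^ 2 ≤ 1 / (#s : ℝ) * ∑ i ∈ s, ‖v i‖ ^ 2 := by
  calc ‖(1 / (#s : ℝ)) • ∑ i ∈ s, v i‖ ^ 2 ≤ ((∑ i ∈ s, ‖v i‖) / #s) ^ 2 := by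
        rw [norm_smul, Real.norm_of_nonneg (by positivity), one_div_mul_eq_div]
        gcongr
        exact norm_sum_le _ _
    _ ≤ (∑ i ∈ s, ‖v i‖ ^ 2) / #s := sum_div_card_sq_le_sum_sq_div_card
    _ = _ := by rw [one_div_mul_eq_div]

theorem neg_inner_avg_sub_sum_inner_le {ι : Type*} [Fintype ι] {F : ι → Type*}
    [∀ i, NormedAddCommGroup (F i)] [∀ i, InnerProductSpace ℝ (F i)]
    (a b : ι → E) (c d : ∀ i, F i) (r : ι → ℝ) {K η : ℝ} (hη : 0 ≤ η)
    (h : ∀ i, ‖a i - b i‖ ^ 2 + ‖c i - d i‖ ^ 2 ≤ K * r i) :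
    -η * ⟪(1 / (Fintype.card ι : ℝ)) • ∑ i, a i, (1 / (Fintype.card ι : ℝ)) • ∑ i, b i⟫_ℝ
        - η / Fintype.card ι * ∑ i, ⟪c i, d i⟫_ℝ
      ≤ -(η / 2) * (‖(1 / (Fintype.card ι : ℝ)) • ∑ i, a i‖ ^ 2
            + ∑ i, ‖(1 / (Fintype.card ι : ℝ)) • c i‖ ^ 2)
        - (η / 2) * (‖(1 / (Fintype.card ι : ℝ)) • ∑ i, b i‖ ^ 2
            + ∑ i, ‖(1 / (Fintype.card ι : ℝ)) • d i‖ ^ 2)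
        + η * K / 2 * (1 / (Fintype.card ι : ℝ) * ∑ i, r i) := by
  set t : ℝ := 1 / (Fintype.card ι : ℝ)
  have ht₀ : 0 ≤ t := Nat.one_div_cast_nonneg _
  have ht₁ : t ≤ 1 := by simpa only [t, one_div] using Nat.cast_inv_le_one (Fintype.card ι)
  set A := t • ∑ i, a i
  set B := t • ∑ i, b i
  have hAB : ‖A - B‖ ^ 2 ≤ t * ∑ i, ‖a i - b i‖ ^ 2 := by
    rw [← smul_sub, ← sum_sub_distrib]
    simpa only [card_univ] using sq_norm_avg_le_avg_sq_norm univ fun i => a i - b i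
  have hβ : -(t * ∑ i, ⟪c i, d i⟫_ℝ) ≤
      -(∑ i, ‖t • c i‖ ^ 2 + ∑ i, ‖t • d i‖ ^ 2) / 2 + t * (∑ i, ‖c i - d i‖ ^ 2) / 2 := by
    calc -(t * ∑ i, ⟪c i, d i⟫_ℝ) = ∑ i, -(t * ⟪c i, d i⟫_ℝ) := by rw [mul_sum, sum_neg_distrib]
      _ ≤ ∑ i, (-(‖t • c i‖ ^ 2 + ‖t • d i‖ ^ 2) / 2 + t * ‖c i - d i‖ ^ 2 / 2) :=
        sum_le_sum fun i _ => neg_mul_inner_le ht₀ ht₁ (c i) (d i)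
      _ = _ := by
        rw [sum_add_distrib, ← sum_div, ← sum_div, sum_neg_distrib, sum_add_distrib, mul_sum]
  have hK : ∑ i, ‖a i - b i‖ ^ 2 + ∑ i, ‖c i - d i‖ ^ 2 ≤ K * ∑ i, r i := by
    rw [← sum_add_distrib, mul_sum]
    exact sum_le_sum fun i _ => h i
  have key : -⟪A, B⟫_ℝ - t * ∑ i, ⟪c i, d i⟫_ℝ
      ≤ -(1 / 2) * (‖A‖ ^ 2 + ∑ i, ‖t • c i‖ ^ 2) - (1 / 2) * (‖B‖ ^ 2 + ∑ i, ‖t • d i‖ ^ 2)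
        + K / 2 * (t * ∑ i, r i) := by
    have := norm_sub_sq_real A B
    linarith [mul_le_mul_of_nonneg_left hK ht₀]
  have hηt : η / Fintype.card ι = η * t := by rw [div_eq_mul_one_div]
  calc _ = η * (-⟪A, B⟫_ℝ - t * ∑ i, ⟪c i, d i⟫_ℝ) := by rw [hηt]; ring
    _ ≤ η * (-(1 / 2) * (‖A‖ ^ 2 + ∑ i, ‖t • c i‖ ^ 2) - (1 / 2) * (‖B‖ ^ 2 + ∑ i, ‖t • d i‖ ^ 2)
        + K / 2 * (t * ∑ i, r i)) := by gcongr
    _ = _ := by ring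

end

theorem stmt14_inner_product_bound_general
    (d0 M : ℕ) (dm : Fin M → ℕ) (L : ℝ)
    (f : (m : Fin M) → Vec d0 → Vec (dm m) → ℝ)
    (hdiff : ∀ m, Differentiable ℝ
      (fun p : WithLp 2 (Vec d0 × Vec (dm m)) => f m p.ofLp.1 p.ofLp.2))
    (hsmooth : ∀ m, ∀ u v : WithLp 2 (Vec d0 × Vec (dm m)),
      ‖gradient (fun p : WithLp 2 (Vec d0 × Vec (dm m)) => f m p.ofLp.1 p.ofLp.2) u
        - gradient (fun p : WithLp 2 (Vec d0 × Vec (dm m)) => f m p.ofLp.1 p.ofLp.2) v‖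
        ≤ L * ‖u - v‖)
    (w_ : Fin M → Vec d0) (β : ∀ m, Vec (dm m)) (η : ℝ) (hη : 0 ≤ η) :
    -- abbreviations: w̄, V, and the partial gradients at θ_m and θ̂_m
    (let wbar : Vec d0 := (M : ℝ)⁻¹ • ∑ m, w_ m
     let V : ℝ := (1 / (M : ℝ)) * ∑ m, ‖w_ m - wbar‖ ^ 2
     let gwθ : (m : Fin M) → Vec d0 := fun m => gradient (fun u => f m u (β m)) (w_ m)
     let gwθh : (m : Fin M) → Vec d0 := fun m => gradient (fun u => f m u (β m)) wbar
     let gbθ : (m : Fin M) → Vec (dm m) := fun m => gradient (fun u => f m (w_ m) u) (β m)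
     let gbθh : (m : Fin M) → Vec (dm m) := fun m => gradient (fun u => f m wbar u) (β m);
     -η * ⟪(1 / (M : ℝ)) • ∑ m, gwθh m, (1 / (M : ℝ)) • ∑ m, gwθ m⟫_ℝ
       - (η / M) * ∑ m, ⟪gbθh m, gbθ m⟫_ℝ
     ≤ -(η / 2) * (‖(1 / (M : ℝ)) • ∑ m, gwθh m‖ ^ 2 + ∑ m, ‖(1 / (M : ℝ)) • gbθh m‖ ^ 2)
       - (η / 2) * (‖(1 / (M : ℝ)) • ∑ m, gwθ m‖ ^ 2 + ∑ m, ‖(1 / (M : ℝ)) • gbθ m‖ ^ 2)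
       + (η * L ^ 2 / 2) * V) := by
  intro wbar V gwθ gwθh gbθ gbθh
  have hsmooth_at : ∀ m, ‖gwθh m - gwθ m‖ ^ 2 + ‖gbθh m - gbθ m‖ ^ 2
      ≤ L ^ 2 * ‖w_ m - wbar‖ ^ 2 := fun m => by
    simpa [norm_sub_rev wbar] using
      sq_norm_partialGradient_sub_le (hdiff m) (hsmooth m) wbar (w_ m) (β m) (β m)
  simpa only [Fintype.card_fin] using
    neg_inner_avg_sub_sum_inner_le gwθh gwθ gbθh gbθ (fun m => ‖w_ m - wbar‖ ^ 2) hη hsmooth_at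

/-- Lemma 10 of the paper.  If each `f_m` is differentiable and
`L`-smooth, then for `θ_m = (w_m,β_m)`, `θ̂_m = (w̄,β_m)`, `V = (1/M)∑_m‖w_m−w̄‖²` and
every `η ≥ 0`,
`−η⟨(1/M)∑_m ∇_w f_m(θ̂_m), (1/M)∑_m ∇_w f_m(θ_m)⟩
  − (η/M)∑_m ⟨∇_{β_m} f_m(θ̂_m), ∇_{β_m} f_m(θ_m)⟩
  ≤ −(η/2)‖G(θ̂)‖² − (η/2)‖G(θ)‖² + (ηL²/2)V`,
where `‖G(θ)‖² = ‖(1/M)∑_m ∇_w f_m(θ_m)‖² + ∑_m ‖(1/M)∇_{β_m} f_m(θ_m)‖²`. -/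
theorem stmt14_inner_product_bound
    (d0 M : ℕ) (hM : 0 < M) (dm : Fin M → ℕ) (L : ℝ)
    (f : (m : Fin M) → Vec d0 → Vec (dm m) → ℝ)
    (hdiff : ∀ m, Differentiable ℝ
      (fun p : WithLp 2 (Vec d0 × Vec (dm m)) => f m p.ofLp.1 p.ofLp.2))
    (hsmooth : ∀ m, ∀ u v : WithLp 2 (Vec d0 × Vec (dm m)),
      ‖gradient (fun p : WithLp 2 (Vec d0 × Vec (dm m)) => f m p.ofLp.1 p.ofLp.2) u
        - gradient (fun p : WithLp 2 (Vec d0 × Vec (dm m)) => f m p.ofLp.1 p.ofLp.2) v‖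
        ≤ L * ‖u - v‖)
    (w_ : Fin M → Vec d0) (β : ∀ m, Vec (dm m)) (η : ℝ) (hη : 0 ≤ η) :
    -- abbreviations: w̄, V, and the partial gradients at θ_m and θ̂_m
    (let wbar : Vec d0 := (M : ℝ)⁻¹ • ∑ m, w_ m
     let V : ℝ := (1 / (M : ℝ)) * ∑ m, ‖w_ m - wbar‖ ^ 2
     let gwθ : (m : Fin M) → Vec d0 := fun m => gradient (fun u => f m u (β m)) (w_ m)
     let gwθh : (m : Fin M) → Vec d0 := fun m => gradient (fun u => f m u (β m)) wbar
     let gbθ : (m : Fin M) → Vec (dm m) := fun m => gradient (fun u => f m (w_ m) u) (β m)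
     let gbθh : (m : Fin M) → Vec (dm m) := fun m => gradient (fun u => f m wbar u) (β m);
     -η * ⟪(1 / (M : ℝ)) • ∑ m, gwθh m, (1 / (M : ℝ)) • ∑ m, gwθ m⟫_ℝ
       - (η / M) * ∑ m, ⟪gbθh m, gbθ m⟫_ℝ
     ≤ -(η / 2) * (‖(1 / (M : ℝ)) • ∑ m, gwθh m‖ ^ 2 + ∑ m, ‖(1 / (M : ℝ)) • gbθh m‖ ^ 2)
       - (η / 2) * (‖(1 / (M : ℝ)) • ∑ m, gwθ m‖ ^ 2 + ∑ m, ‖(1 / (M : ℝ)) • gbθ m‖ ^ 2)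
       + (η * L ^ 2 / 2) * V) :=
  stmt14_inner_product_bound_general d0 M dm L f hdiff hsmooth w_ β η hη
end
end

section
/- Let k_p ≤ v_p be integers, D > 0, and for k_p ≤ k ≤ v_p let η_k > 0, Δ_k ∈ (0,1], B_k ≥ 0, c_k ∈ ℝ, e_k ≥ 0 be reals, and let a_k (k_p ≤ k ≤ v_p + 1) be reals satisfying the recursion a_{k+1} ≤ Δ_k a_k + (η_k/2)(−1 + Dη_k)e_k + B_k Σ_{t=k_p}^{k−1} η_t² e_t + c_k for all k_p ≤ k ≤ v_p (empty sums being zero). Assume the stepsize conditions: for every j with k_p ≤ j ≤ v_p, η_j ≤ (D + 2(B_{v_p} + Σ_{i=j+1}^{v_p−1} B_i ∏_{l=i+1}^{v_p} Δ_l)/∏_{i=j+1}^{v_p} Δ_i)^{−1}, where for j = v_p this reads η_{v_p} ≤ 1/D (empty sums are zero and empty products are one). Then a_{v_p+1} ≤ (∏_{k=k_p}^{v_p} Δ_k)·a_{k_p} + Σ_{k=k_p}^{v_p−1}(∏_{i=k+1}^{v_p} Δ_i)·c_k + c_{v_p}. -/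
/-!
Unrolling the recursion bounds `a_{v_p+1}` by `(∏ Δ) a_{k_p} + ∑_k Q_k (err_k + c_k)`, where
`Q_k = ∏_{k < i ≤ v_p} Δ_i` and `err_k` collects the `e`-terms. Exchanging the double sum in the
`B`-part makes `∑_k Q_k err_k` a sum over `t` of `e_t` times `η_t / 2 · (η_t (Q_t D + 2 S_t) - Q_t)`,
`S_t = ∑_{t < k ≤ v_p} Q_k B_k`, and the stepsize condition on `η_t` says exactly that this
coefficient is nonpositive.
-/

open Finset

theorem le_prod_mul_add_sum_prod_mul_of_le_mul_add {R : Type*} [CommSemiring R] [PartialOrder R]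
    [IsOrderedRing R] {a Δ f : ℕ → R} {m n : ℕ} (hmn : m ≤ n)
    (hΔ : ∀ k ∈ Ico m n, 0 ≤ Δ k) (hrec : ∀ k ∈ Ico m n, a (k + 1) ≤ Δ k * a k + f k) :
    a n ≤ (∏ i ∈ Ico m n, Δ i) * a m + ∑ k ∈ Ico m n, (∏ i ∈ Ico (k + 1) n, Δ i) * f k := by
  induction n, hmn using Nat.le_induction with
  | base => simp
  | succ n hmn ih =>
    have hn : n ∈ Ico m (n + 1) := mem_Ico.2 ⟨hmn, n.lt_succ_self⟩
    have ih := ih (fun k hk => hΔ k (Ico_subset_Ico_right n.le_succ hk))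
      (fun k hk => hrec k (Ico_subset_Ico_right n.le_succ hk))
    have hshift : ∀ k ∈ Ico m n,
        Δ n * ((∏ i ∈ Ico (k + 1) n, Δ i) * f k) = (∏ i ∈ Ico (k + 1) (n + 1), Δ i) * f k := by
      intro k hk
      rw [prod_Ico_succ_top (mem_Ico.1 hk).2]
      ring
    calc a (n + 1) ≤ Δ n * a n + f n := hrec n hn
      _ ≤ Δ n * ((∏ i ∈ Ico m n, Δ i) * a m
            + ∑ k ∈ Ico m n, (∏ i ∈ Ico (k + 1) n, Δ i) * f k) + f n := by
          gcongr
          exact hΔ n hn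
      _ = _ := by
          rw [prod_Ico_succ_top hmn, sum_Ico_succ_top hmn, mul_add, mul_sum, sum_congr rfl hshift,
            Ico_self, prod_empty, one_mul]
          ring

theorem sum_mul_sum_Ico_eq_sum_sum_Ico_mul {R : Type*} [NonUnitalNonAssocSemiring R]
    (w g : ℕ → R) (m n : ℕ) :
    ∑ k ∈ Ico m n, w k * ∑ t ∈ Ico m k, g t = ∑ t ∈ Ico m n, (∑ k ∈ Ico (t + 1) n, w k) * g t := by
  simp_rw [mul_sum, sum_mul]
  exact (sum_Ico_Ico_comm' m n fun t k => w k * g t).symm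

theorem sum_mul_descent_error_nonpos {w η e B : ℕ → ℝ} {D : ℝ} {m n : ℕ}
    (hη : ∀ t ∈ Ico m n, 0 ≤ η t) (he : ∀ t ∈ Ico m n, 0 ≤ e t)
    (hstep : ∀ t ∈ Ico m n, η t * (w t * D + 2 * ∑ k ∈ Ico (t + 1) n, w k * B k) ≤ w t) :
    ∑ k ∈ Ico m n, w k * (η k / 2 * (-1 + D * η k) * e k + B k * ∑ t ∈ Ico m k, η t ^ 2 * e t)
      ≤ 0 := by
  have hswap := sum_mul_sum_Ico_eq_sum_sum_Ico_mul (fun k => w k * B k) (fun t => η t ^ 2 * e t) m n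
  simp_rw [mul_add, sum_add_distrib, ← mul_assoc, hswap, ← sum_add_distrib]
  refine sum_nonpos fun t ht => ?_
  nlinarith [mul_nonneg (hη t ht) (he t ht), hstep t ht]

theorem mul_add_le_of_le_inv_add_div {η D Q T : ℝ} (hD : 0 < D) (hQ : 0 < Q) (hT : 0 ≤ T)
    (h : η ≤ (D + T / Q)⁻¹) : η * (Q * D + T) ≤ Q := by
  have hpos : 0 < D + T / Q := by positivity
  have h1 : η * (D + T / Q) ≤ 1 := by
    calc η * (D + T / Q) ≤ (D + T / Q)⁻¹ * (D + T / Q) := by gcongr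
      _ = 1 := inv_mul_cancel₀ hpos.ne'
  calc η * (Q * D + T) = Q * (η * (D + T / Q)) := by field_simp
    _ ≤ Q := by nlinarith

theorem mul_tail_prod_add_le_tail_prod {η Δ B : ℕ → ℝ} {D : ℝ} {kp vp t : ℕ} (hD : 0 < D)
    (hΔ : ∀ k, kp ≤ k → k ≤ vp → 0 < Δ k) (hB : ∀ k, kp ≤ k → k ≤ vp → 0 ≤ B k)
    (hηvp : η vp ≤ 1 / D)
    (hηj : ∀ j, kp ≤ j → j < vp →
      η j ≤ (D + 2 * (B vp + ∑ i ∈ Ico (j + 1) vp, B i * ∏ l ∈ Ico (i + 1) (vp + 1), Δ l)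
                 / ∏ i ∈ Ico (j + 1) (vp + 1), Δ i)⁻¹)
    (hkt : kp ≤ t) (htv : t ≤ vp) :
    η t * ((∏ i ∈ Ico (t + 1) (vp + 1), Δ i) * D
        + 2 * ∑ k ∈ Ico (t + 1) (vp + 1), (∏ i ∈ Ico (k + 1) (vp + 1), Δ i) * B k)
      ≤ ∏ i ∈ Ico (t + 1) (vp + 1), Δ i := by
  have hQ : ∀ s, kp ≤ s → 0 < ∏ i ∈ Ico (s + 1) (vp + 1), Δ i := fun s hs =>
    prod_pos fun i hi => by
      obtain ⟨hsi, hiv⟩ := mem_Ico.1 hi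
      exact hΔ i (by omega) (by omega)
  have hS : 0 ≤ ∑ k ∈ Ico (t + 1) (vp + 1), (∏ i ∈ Ico (k + 1) (vp + 1), Δ i) * B k :=
    sum_nonneg fun k hk => by
      obtain ⟨htk, hkv⟩ := mem_Ico.1 hk
      exact mul_nonneg (hQ k (by omega)).le (hB k (by omega) (by omega))
  refine mul_add_le_of_le_inv_add_div hD (hQ t hkt) (by positivity) ?_
  rcases htv.lt_or_eq with hlt | rfl
  · convert hηj t hkt hlt using 5
    rw [sum_Ico_succ_top hlt, add_comm]
    simp [mul_comm]
  · simpa using hηvp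

/-- Lemma 13 of the paper: a recursion lemma for finite real sequences.
Given `a_{k+1} ≤ Δ_k a_k + (η_k/2)(−1+Dη_k)e_k + B_k ∑_{t=k_p}^{k−1} η_t² e_t + c_k` on the
window `k_p ≤ k ≤ v_p`, and the stepsize conditions
`η_{v_p} ≤ 1/D` and, for `k_p ≤ j < v_p`,
`η_j ≤ (D + 2(B_{v_p} + ∑_{i=j+1}^{v_p−1} B_i ∏_{l=i+1}^{v_p} Δ_l)/∏_{i=j+1}^{v_p} Δ_i)⁻¹`,
one gets `a_{v_p+1} ≤ (∏_{k=k_p}^{v_p} Δ_k) a_{k_p}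
  + ∑_{k=k_p}^{v_p−1} (∏_{i=k+1}^{v_p} Δ_i) c_k + c_{v_p}`. -/
theorem stmt16_recursion_lemma
    (kp vp : ℕ) (hkv : kp ≤ vp) (D : ℝ) (hD : 0 < D)
    (η Δ B c e : ℕ → ℝ) (a : ℕ → ℝ)
    (hη : ∀ k, kp ≤ k → k ≤ vp → 0 < η k)
    (hΔ : ∀ k, kp ≤ k → k ≤ vp → 0 < Δ k ∧ Δ k ≤ 1)
    (hB : ∀ k, kp ≤ k → k ≤ vp → 0 ≤ B k)
    (he : ∀ k, kp ≤ k → k ≤ vp → 0 ≤ e k)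
    (hrec : ∀ k, kp ≤ k → k ≤ vp →
      a (k + 1) ≤ Δ k * a k + η k / 2 * (-1 + D * η k) * e k
        + B k * ∑ t ∈ Ico kp k, η t ^ 2 * e t + c k)
    (hηvp : η vp ≤ 1 / D)
    (hηj : ∀ j, kp ≤ j → j < vp →
      η j ≤ (D + 2 * (B vp + ∑ i ∈ Ico (j + 1) vp, B i * ∏ l ∈ Ico (i + 1) (vp + 1), Δ l)
                 / ∏ i ∈ Ico (j + 1) (vp + 1), Δ i)⁻¹) :
    a (vp + 1) ≤ (∏ k ∈ Icc kp vp, Δ k) * a kp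
      + ∑ k ∈ Ico kp vp, (∏ i ∈ Ico (k + 1) (vp + 1), Δ i) * c k + c vp := by
  have hmem : ∀ {k}, k ∈ Ico kp (vp + 1) ↔ kp ≤ k ∧ k ≤ vp := by
    intro k; rw [mem_Ico, Nat.lt_succ_iff]
  set Q : ℕ → ℝ := fun k => ∏ i ∈ Ico (k + 1) (vp + 1), Δ i
  set err : ℕ → ℝ := fun k =>
    η k / 2 * (-1 + D * η k) * e k + B k * ∑ t ∈ Ico kp k, η t ^ 2 * e t
  have hunroll := le_prod_mul_add_sum_prod_mul_of_le_mul_add (a := a) (f := fun k => err k + c k)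
    (by omega : kp ≤ vp + 1) (fun k hk => (hΔ k (hmem.1 hk).1 (hmem.1 hk).2).1.le)
    (fun k hk => by have := hrec k (hmem.1 hk).1 (hmem.1 hk).2; simp only [err]; linarith)
  have herr : ∑ k ∈ Ico kp (vp + 1), Q k * err k ≤ 0 :=
    sum_mul_descent_error_nonpos (fun t ht => (hη t (hmem.1 ht).1 (hmem.1 ht).2).le)
      (fun t ht => he t (hmem.1 ht).1 (hmem.1 ht).2) fun t ht =>
        mul_tail_prod_add_le_tail_prod hD (fun k h₁ h₂ => (hΔ k h₁ h₂).1) hB hηvp hηj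
          (hmem.1 ht).1 (hmem.1 ht).2
  have hsplit : ∑ k ∈ Ico kp (vp + 1), Q k * (err k + c k)
      = ∑ k ∈ Ico kp (vp + 1), Q k * err k + (∑ k ∈ Ico kp vp, Q k * c k + c vp) := by
    simp_rw [mul_add (Q _), sum_add_distrib]
    rw [sum_Ico_succ_top hkv (fun k => Q k * c k)]
    simp [Q]
  rw [← Ico_add_one_right_eq_Icc]
  linarith
end

section
/- Let μ, L, λ, C_1, C_2, σ_1², B > 0, M ≥ 1 and τ ≥ 1 be given, set D := λL(C_1/M + C_2 + 1), and for k ≥ 0 define η_k := 1/(μ(k + βτ + 1)), Δ_k := 1 − μη_k, and B_k := (1/2)η_k L² λ (τ−1)(C_1+1). Suppose β > max{(2λL/μ)(C_1/M + C_2 + 1) − 2, 2L²λ(C_1+1)/μ², 1}, β²/e^{1/β} > 2L²λ(C_1+1)/μ², and τ ≥ √( max{(2L²λ(C_1+1)/μ²)e^{1/β} − 4, 0} / (β² − (2L²λ(C_1+1)/μ²)e^{1/β}) ). Then for every p ≥ 0, writing k_p := pτ and v_p := (p+1)τ − 1, the stepsize conditions hold: for every j with k_p ≤ j ≤ v_p,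 η_j ≤ (D + 2(B_{v_p} + Σ_{i=j+1}^{v_p−1} B_i ∏_{l=i+1}^{v_p} Δ_l)/∏_{i=j+1}^{v_p} Δ_i)^{−1} (empty sums zero, empty products one; for j = v_p this reads η_{v_p} ≤ 1/D). -/
/-!
With `s = βτ` we have `Δ_k = (k + s)/(k + s + 1)`, so the products of the `Δ`'s telescope and
every term `B_i ∏_{l=i+1}^{v} Δ_l` of the sum equals `B_v`. Writing `B_k = c η_k`, the condition
at `j` becomes `η_j ≤ (D + 2 (v - j) c η_j)⁻¹`, i.e. `D x + 2 (v - j) c ≤ x²` for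
`x = 1/η_j ≥ μ(βτ + 1)`. This quadratic inequality follows from `2D ≤ μ(β + 2)`,
`4c ≤ β²μ²(τ - 1)` (as `2L²λ(C_1+1)/μ² < β < β²`) and `v - j ≤ τ - 1`.
-/

open Finset Real
noncomputable section

theorem Finset.prod_Ico_div₀' {G₀ : Type*} [CommGroupWithZero G₀] (f : ℕ → G₀) {m n : ℕ}
    (hmn : m ≤ n) (hf : ∀ i, f i ≠ 0) : ∏ i ∈ Ico m n, f i / f (i + 1) = f m / f n := by
  induction n, hmn using Nat.le_induction with
  | base => simp [div_self (hf m)]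
  | succ n hmn ih => rw [prod_Ico_succ_top hmn, ih, div_mul_div_cancel₀ (hf n)]

section DiminishingStepsize

variable {μ s : ℝ} {η : ℕ → ℝ}

lemma one_sub_mul_stepsize (hμ : μ ≠ 0) (hs : 0 < s)
    (hη : ∀ k : ℕ, η k = 1 / (μ * (k + s + 1))) (k : ℕ) :
    1 - μ * η k = (k + s) / ((k + 1 : ℕ) + s) := by
  have : (k : ℝ) + s + 1 ≠ 0 := by positivity
  rw [hη]
  push_cast
  field_simp
  ring

lemma prod_Ico_one_sub_mul_stepsize (hμ : μ ≠ 0) (hs : 0 < s)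
    (hη : ∀ k : ℕ, η k = 1 / (μ * (k + s + 1))) {m n : ℕ} (hmn : m ≤ n) :
    ∏ i ∈ Ico m n, (1 - μ * η i) = (m + s) / (n + s) := by
  simp_rw [one_sub_mul_stepsize hμ hs hη]
  exact prod_Ico_div₀' (fun k : ℕ => (k : ℝ) + s) hmn fun k => by positivity

lemma tail_sum_div_prod_eq (hμ : μ ≠ 0) (hs : 0 < s)
    (hη : ∀ k : ℕ, η k = 1 / (μ * (k + s + 1))) (c : ℝ) {j v : ℕ} (hjv : j < v) :
    (c * η v + ∑ i ∈ Ico (j + 1) v, c * η i * ∏ l ∈ Ico (i + 1) (v + 1), (1 - μ * η l)) /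
      ∏ i ∈ Ico (j + 1) (v + 1), (1 - μ * η i) = (v - j) * c * η j := by
  have hne : ∀ k : ℕ, (k : ℝ) + s + 1 ≠ 0 := fun k => by positivity
  have hterm : ∀ i ∈ Ico (j + 1) v,
      c * η i * ∏ l ∈ Ico (i + 1) (v + 1), (1 - μ * η l) = c * η v := by
    intro i hi
    rw [prod_Ico_one_sub_mul_stepsize hμ hs hη (by grind), hη, hη]
    have := hne i; have := hne v
    push_cast
    field_simp
    ring
  rw [sum_congr rfl hterm, sum_const, Nat.card_Ico, nsmul_eq_mul,
    prod_Ico_one_sub_mul_stepsize hμ hs hη (by omega), hη, hη, Nat.cast_sub hjv]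
  have := hne j; have := hne v
  push_cast
  field_simp
  ring

end DiminishingStepsize

lemma quadratic_block_bound {β τ y w : ℝ} (hβ : 0 ≤ β) (hτ : 1 ≤ τ) (hy : β * τ + 1 ≤ y)
    (hw : w ≤ τ - 1) :
    (β + 2) * y + β ^ 2 * (τ - 1) * w ≤ 2 * y ^ 2 := by
  nlinarith [mul_nonneg (sub_nonneg.2 hy) (by nlinarith : (0:ℝ) ≤ 2 * (y + β * τ + 1) - (β + 2)),
    mul_le_mul_of_nonneg_left hw (by nlinarith : (0:ℝ) ≤ β ^ 2 * (τ - 1)),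
    mul_nonneg (sq_nonneg β) (by linarith : (0:ℝ) ≤ τ)]

lemma stepsize_le_inv {μ β τ D c y w : ℝ} (hμ : 0 < μ) (hβ : 0 ≤ β) (hτ : 1 ≤ τ)
    (hD0 : 0 < D) (hD : 2 * D ≤ μ * (β + 2)) (hc0 : 0 ≤ c) (hc : 4 * c ≤ β ^ 2 * μ ^ 2 * (τ - 1))
    (hy : β * τ + 1 ≤ y) (hw0 : 0 ≤ w) (hw : w ≤ τ - 1) :
    1 / (μ * y) ≤ (D + 2 * (w * c * (1 / (μ * y))))⁻¹ := by
  have hy0 : 0 < y := by nlinarith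
  have hx : 0 < μ * y := mul_pos hμ hy0
  have key : D * (μ * y) + 2 * (w * c) ≤ (μ * y) ^ 2 := by
    nlinarith [mul_le_mul_of_nonneg_right hD hx.le, mul_le_mul_of_nonneg_left hc hw0,
      mul_le_mul_of_nonneg_left (quadratic_block_bound hβ hτ hy hw) (sq_nonneg μ)]
  rw [le_inv_comm₀ (by positivity) (by positivity), one_div, inv_inv]
  calc D + 2 * (w * c * (μ * y)⁻¹) = (D * (μ * y) + 2 * (w * c)) / (μ * y) := by field_simp
    _ ≤ (μ * y) ^ 2 / (μ * y) := by gcongr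
    _ = μ * y := by field_simp

lemma cast_block_last_sub_le {p τ j : ℕ} (hτ : 1 ≤ τ) (hj : p * τ ≤ j) :
    (((p + 1) * τ - 1 : ℕ) : ℝ) - j ≤ τ - 1 := by
  have h : (p + 1) * τ - 1 + 1 ≤ j + τ := by rw [add_one_mul]; omega
  have : (((p + 1) * τ - 1 : ℕ) : ℝ) + 1 ≤ j + τ := by exact_mod_cast h
  linarith

theorem stmt17_stepsize_conditions_general
    (μ L lam C1 C2 : ℝ) (M τ : ℕ)
    (hμ : 0 < μ) (hL : 0 < L) (hlam : 0 < lam) (hC1 : 0 < C1) (hC2 : 0 < C2)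
    (hτ : 1 ≤ τ)
    (bet : ℝ)
    (hbet : max (max (2 * lam * L / μ * (C1 / M + C2 + 1) - 2)
      (2 * L ^ 2 * lam * (C1 + 1) / μ ^ 2)) 1 < bet)
    (η Δ B : ℕ → ℝ) (D : ℝ)
    (hηdef : ∀ k : ℕ, η k = 1 / (μ * ((k : ℝ) + bet * τ + 1)))
    (hΔdef : ∀ k : ℕ, Δ k = 1 - μ * η k)
    (hBdef : ∀ k : ℕ, B k = 1 / 2 * η k * L ^ 2 * lam * ((τ : ℝ) - 1) * (C1 + 1))
    (hDdef : D = lam * L * (C1 / M + C2 + 1)) :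
    ∀ p : ℕ,
      (let vp := (p + 1) * τ - 1;
       η vp ≤ 1 / D
       ∧ ∀ j, p * τ ≤ j → j < vp →
          η j ≤ (D + 2 * (B vp + ∑ i ∈ Ico (j + 1) vp, B i * ∏ l ∈ Ico (i + 1) (vp + 1), Δ l)
                     / ∏ i ∈ Ico (j + 1) (vp + 1), Δ i)⁻¹) := by
  obtain ⟨⟨hDβ, hKβ⟩, hβ1⟩ : (2 * lam * L / μ * (C1 / M + C2 + 1) - 2 < bet ∧
      2 * L ^ 2 * lam * (C1 + 1) / μ ^ 2 < bet) ∧ 1 < bet := by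
    simpa only [max_lt_iff] using hbet
  have hτR : (1 : ℝ) ≤ τ := by exact_mod_cast hτ
  set c : ℝ := 1 / 2 * L ^ 2 * lam * ((τ : ℝ) - 1) * (C1 + 1)
  have hB : ∀ k, B k = c * η k := fun k => by rw [hBdef]; ring
  have hD0 : 0 < D := by rw [hDdef]; positivity
  have hD : 2 * D ≤ μ * (bet + 2) := by
    rw [sub_lt_iff_lt_add, div_mul_eq_mul_div, div_lt_iff₀ hμ] at hDβ
    linarith
  have hc0 : 0 ≤ c := by have := sub_nonneg.2 hτR; positivity
  have hc : 4 * c ≤ bet ^ 2 * μ ^ 2 * (τ - 1) := by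
    rw [div_lt_iff₀ (by positivity)] at hKβ
    have hK : 2 * L ^ 2 * lam * (C1 + 1) ≤ bet ^ 2 * μ ^ 2 :=
      hKβ.le.trans (by gcongr; nlinarith)
    calc 4 * c = 2 * L ^ 2 * lam * (C1 + 1) * (τ - 1) := by ring
      _ ≤ bet ^ 2 * μ ^ 2 * (τ - 1) := by gcongr
  have hcond : ∀ (j : ℕ) (w : ℝ), 0 ≤ w → w ≤ τ - 1 → η j ≤ (D + 2 * (w * c * η j))⁻¹ :=
    fun j w hw0 hw => by
      rw [hηdef]
      exact stepsize_le_inv hμ (by positivity) hτR hD0 hD hc0 hc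
        (by linarith [j.cast_nonneg (α := ℝ)]) hw0 hw
  intro p
  dsimp only
  refine ⟨by simpa using hcond ((p + 1) * τ - 1) 0 le_rfl (by linarith), fun j hj hjv => ?_⟩
  simp only [hΔdef, hB]
  rw [mul_div_assoc, tail_sum_div_prod_eq hμ.ne' (by positivity) hηdef c hjv]
  exact hcond j _ (sub_nonneg.2 (by exact_mod_cast hjv.le)) (cast_block_last_sub_le hτ hj)

/-- Lemma 14 of the paper: the diminishing stepsizes
`η_k = 1/(μ(k + βτ + 1))` satisfy, on every communication block `[pτ, (p+1)τ − 1]`, the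
stepsize conditions of the recursion lemma with `Δ_k = 1 − μη_k`,
`B_k = (1/2)η_k L² λ (τ−1)(C_1+1)` and `D = λL(C_1/M + C_2 + 1)`, provided `β` and `τ` are
large enough as specified. -/
theorem stmt17_stepsize_conditions
    (μ L lam C1 C2 σ1sq Bsz : ℝ) (M τ : ℕ)
    (hμ : 0 < μ) (hL : 0 < L) (hlam : 0 < lam) (hC1 : 0 < C1) (hC2 : 0 < C2)
    (hσ1 : 0 < σ1sq) (hBsz : 0 < Bsz) (hM : 1 ≤ M) (hτ : 1 ≤ τ)
    (bet : ℝ)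
    (hbet : max (max (2 * lam * L / μ * (C1 / M + C2 + 1) - 2)
      (2 * L ^ 2 * lam * (C1 + 1) / μ ^ 2)) 1 < bet)
    (hbet2 : 2 * L ^ 2 * lam * (C1 + 1) / μ ^ 2 < bet ^ 2 / Real.exp (1 / bet))
    (hτ2 : Real.sqrt (max ((2 * L ^ 2 * lam * (C1 + 1) / μ ^ 2) * Real.exp (1 / bet) - 4) 0
      / (bet ^ 2 - (2 * L ^ 2 * lam * (C1 + 1) / μ ^ 2) * Real.exp (1 / bet))) ≤ (τ : ℝ))
    (η Δ B : ℕ → ℝ) (D : ℝ)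
    (hηdef : ∀ k : ℕ, η k = 1 / (μ * ((k : ℝ) + bet * τ + 1)))
    (hΔdef : ∀ k : ℕ, Δ k = 1 - μ * η k)
    (hBdef : ∀ k : ℕ, B k = 1 / 2 * η k * L ^ 2 * lam * ((τ : ℝ) - 1) * (C1 + 1))
    (hDdef : D = lam * L * (C1 / M + C2 + 1)) :
    ∀ p : ℕ,
      (let vp := (p + 1) * τ - 1;
       η vp ≤ 1 / D
       ∧ ∀ j, p * τ ≤ j → j < vp →
          η j ≤ (D + 2 * (B vp + ∑ i ∈ Ico (j + 1) vp, B i * ∏ l ∈ Ico (i + 1) (vp + 1), Δ l)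
                     / ∏ i ∈ Ico (j + 1) (vp + 1), Δ i)⁻¹) :=
  stmt17_stepsize_conditions_general μ L lam C1 C2 M τ hμ hL hlam hC1 hC2 hτ bet hbet η Δ B D hηdef
    hΔdef hBdef hDdef
end
end

section
/- Let H : ℝ^{d_x} × ℝ^{d_y} → ℝ be twice continuously differentiable and (jointly) convex, and suppose that for all (x,y) the diagonal Hessian blocks satisfy ∇²_{xx}H(x,y) ⪯ L_x·I_{d_x} and ∇²_{yy}H(x,y) ⪯ L_y·I_{d_y} with L_x, L_y > 0. Then: (i) ∇²H(x,y) ⪯ 2·diag(L_x·I_{d_x}, L_y·I_{d_y}) for all (x,y); and (ii) for all (x,y), (x',y'), the Bregman divergence D_H((x,y),(x',y')) := H(x,y) − H(x',y') − ⟨∇H(x',y'), (x,y) − (x',y')⟩ satisfies D_H((x,y),(x',y')) ≥ (1/(4L_x))‖∇_x H(x,y) − ∇_x H(x',y')‖² + (1/(4L_y))‖∇_y H(x,y) − ∇_y H(x',y')‖². -/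
open Real
open scoped InnerProductSpace
noncomputable section

/-!
Convexity makes the Hessian `M` of `H` positive semidefinite, so writing `v = (v₁, 0) + (0, v₂)`,
`⟪v, M v⟫ ≤ ⟪v, M v⟫ + ⟪v', M v'⟫ = 2 ⟪(v₁, 0), M (v₁, 0)⟫ + 2 ⟪(0, v₂), M (0, v₂)⟫` with
`v' = (v₁, -v₂)`, and the diagonal blocks are bounded by hypothesis: this is (i).

For (ii), the tangent plane of `H` at `q` lies below `H (p + w)`, while (i) bounds `H (p + w)` above
by the second-order expansion of `H` at `p` with curvature `2 diag(L_x, L_y)`. Comparing the two gives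
`D_H(p, q) ≥ ⟪∇H q - ∇H p, w⟫ - (L_x ‖w₁‖² + L_y ‖w₂‖²)` for every `w`, and the choice
`wᵢ = (∇ᵢH q - ∇ᵢH p) / (2 Lᵢ)` maximizes the right-hand side.
-/

open Set
open scoped InnerProduct

theorem ConvexOn.comp_add_smul {E : Type*} [AddCommGroup E] [Module ℝ E] {f : E → ℝ}
    (hconv : ConvexOn ℝ univ f) (a v : E) : ConvexOn ℝ univ fun t : ℝ => f (a + t • v) := by
  simpa [Function.comp_def, AffineMap.lineMap_apply_module', add_comm] using
    hconv.comp_affineMap (AffineMap.lineMap a (a + v))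

theorem le_add_deriv_add_half_of_deriv2_le {k k' k'' : ℝ → ℝ} {C : ℝ}
    (hk : ∀ t, HasDerivAt k (k' t) t) (hk' : ∀ t, HasDerivAt k' (k'' t) t)
    (hC : ∀ t ∈ Icc (0 : ℝ) 1, k'' t ≤ C) : k 1 ≤ k 0 + k' 0 + C / 2 := by
  have hk'_le (t) (ht : t ∈ Icc (0 : ℝ) 1) : k' t ≤ k' 0 + C * t := by
    have := (convex_Icc (0 : ℝ) 1).image_sub_le_mul_sub_of_deriv_le
      (fun s _ => (hk' s).continuousAt.continuousWithinAt)
      (fun s _ => (hk' s).differentiableAt.differentiableWithinAt)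
      (fun s hs => (hk' s).deriv ▸ hC s (interior_subset hs)) 0 (left_mem_Icc.2 zero_le_one) t ht
      ht.1
    linarith
  set g : ℝ → ℝ := fun t => k t - k' 0 * t - C * t ^ 2 / 2
  have hg (t) : HasDerivAt g (k' t - k' 0 - C * t) t := by
    refine (((hk t).sub ((hasDerivAt_id' t).const_mul (k' 0))).sub
      (((hasDerivAt_pow 2 t).const_mul C).div_const 2)).congr_deriv ?_
    push_cast
    ring
  have := (convex_Icc (0 : ℝ) 1).image_sub_le_mul_sub_of_deriv_le (C := 0)
    (fun s _ => (hg s).continuousAt.continuousWithinAt)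
    (fun s _ => (hg s).differentiableAt.differentiableWithinAt)
    (fun s hs => by rw [(hg s).deriv]; linarith [hk'_le s (interior_subset hs)])
    0 (left_mem_Icc.2 zero_le_one) 1 (right_mem_Icc.2 zero_le_one) zero_le_one
  simp only [g] at this
  linarith

section Calculus

variable {G : Type*} [NormedAddCommGroup G] [InnerProductSpace ℝ G] [CompleteSpace G]
  {f : G → ℝ}

theorem ContDiff.gradient {m n : WithTop ℕ∞} (hf : ContDiff ℝ n f) (hmn : m + 1 ≤ n) :
    ContDiff ℝ m (gradient f) :=
  (InnerProductSpace.toDual ℝ G).symm.contDiff.comp (hf.fderiv_right hmn)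

theorem hasDerivAt_comp_add_smul {a v : G} {t : ℝ} (hf : DifferentiableAt ℝ f (a + t • v)) :
    HasDerivAt (fun s : ℝ => f (a + s • v)) ⟪gradient f (a + t • v), v⟫_ℝ t := by
  have hline : HasDerivAt (fun s : ℝ => a + s • v) v t := by
    simpa using ((hasDerivAt_id t).smul_const v).const_add a
  simpa [inner_gradient_left, Function.comp_def] using hf.hasFDerivAt.comp_hasDerivAt t hline

theorem hasDerivAt_inner_gradient_comp_add_smul (hf : ContDiff ℝ 2 f) (a v : G) (t : ℝ) :
    HasDerivAt (fun s : ℝ => ⟪gradient f (a + s • v), v⟫_ℝ)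
      ⟪v, fderiv ℝ (gradient f) (a + t • v) v⟫_ℝ t := by
  have hline : HasDerivAt (fun s : ℝ => a + s • v) v t := by
    simpa using ((hasDerivAt_id t).smul_const v).const_add a
  have hgrad := ((hf.gradient (by norm_num)).differentiable one_ne_zero (a + t • v)).hasFDerivAt
  simpa [real_inner_comm v, Function.comp_def] using
    (innerSL ℝ v).hasFDerivAt.comp_hasDerivAt t (hgrad.comp_hasDerivAt t hline)

theorem ConvexOn.add_inner_gradient_le (hconv : ConvexOn ℝ univ f) {a : G}
    (hf : DifferentiableAt ℝ f a) (b : G) : f a + ⟪gradient f a, b - a⟫_ℝ ≤ f b := by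
  have hder : HasDerivAt (fun t : ℝ => f (a + t • (b - a))) ⟪gradient f a, b - a⟫_ℝ 0 := by
    simpa using hasDerivAt_comp_add_smul (v := b - a) (t := 0) (by simpa using hf)
  have := (hconv.comp_add_smul a (b - a)).deriv_le_slope (mem_univ 0) (mem_univ 1) one_pos
    hder.differentiableAt
  simp only [hder.deriv, slope_def_field, one_smul, zero_smul, add_zero, add_sub_cancel,
    sub_zero, div_one] at this
  linarith

theorem ConvexOn.inner_fderiv_gradient_nonneg (hconv : ConvexOn ℝ univ f) (hf : ContDiff ℝ 2 f)
    (x v : G) : 0 ≤ ⟪v, fderiv ℝ (gradient f) x v⟫_ℝ := by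
  have hder (t : ℝ) : HasDerivAt (fun s : ℝ => f (x + s • v)) ⟪gradient f (x + t • v), v⟫_ℝ t :=
    hasDerivAt_comp_add_smul (hf.differentiable (by norm_num) _)
  have hmono : Monotone fun t : ℝ => ⟪gradient f (x + t • v), v⟫_ℝ := by
    intro s t hst
    simpa [(hder _).deriv] using (hconv.comp_add_smul x v).monotoneOn_deriv
      (fun t _ => (hder t).differentiableAt) (mem_univ s) (mem_univ t) hst
  simpa using (hasDerivAt_inner_gradient_comp_add_smul hf x v 0).nonneg_of_monotone hmono

theorem le_add_inner_gradient_add_half (hf : ContDiff ℝ 2 f) (x w : G) {C : ℝ}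
    (hC : ∀ t ∈ Icc (0 : ℝ) 1, ⟪w, fderiv ℝ (gradient f) (x + t • w) w⟫_ℝ ≤ C) :
    f (x + w) ≤ f x + ⟪gradient f x, w⟫_ℝ + C / 2 := by
  simpa using le_add_deriv_add_half_of_deriv2_le
    (fun t => hasDerivAt_comp_add_smul (hf.differentiable (by norm_num) (x + t • w)))
    (hasDerivAt_inner_gradient_comp_add_smul hf x w) hC

def bregmanDiv (f : G → ℝ) (p q : G) : ℝ :=
  f p - f q - ⟪gradient f q, p - q⟫_ℝ

theorem ConvexOn.inner_sub_half_le_bregmanDiv (hconv : ConvexOn ℝ univ f) (hf : ContDiff ℝ 2 f)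
    (p q w : G) {C : ℝ}
    (hC : ∀ t ∈ Icc (0 : ℝ) 1, ⟪w, fderiv ℝ (gradient f) (p + t • w) w⟫_ℝ ≤ C) :
    ⟪gradient f q - gradient f p, w⟫_ℝ - C / 2 ≤ bregmanDiv f p q := by
  have htangent := hconv.add_inner_gradient_le (hf.differentiable (by norm_num) q) (p + w)
  have hdescent := le_add_inner_gradient_add_half hf p w hC
  rw [show p + w - q = (p - q) + w by abel, inner_add_right] at htangent
  rw [bregmanDiv, inner_sub_left]
  linarith

end Calculus

section Composition

variable {E G : Type*} [NormedAddCommGroup E] [InnerProductSpace ℝ E] [CompleteSpace E]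
  [NormedAddCommGroup G] [InnerProductSpace ℝ G] [CompleteSpace G] {f : G → ℝ} {g : E → G}
  {J : E →L[ℝ] G}

theorem gradient_comp_of_hasFDerivAt {u : E} (hg : HasFDerivAt g J u)
    (hf : DifferentiableAt ℝ f (g u)) : gradient (f ∘ g) u = (J†) (gradient f (g u)) := by
  refine ext_inner_right ℝ fun v => ?_
  rw [inner_gradient_left, (hf.hasFDerivAt.comp u hg).fderiv, ← real_inner_comm,
    ContinuousLinearMap.adjoint_inner_right, real_inner_comm, inner_gradient_left]
  rfl

theorem inner_fderiv_gradient_comp (hf : ContDiff ℝ 2 f) (hg : ∀ u, HasFDerivAt g J u)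
    (u v : E) :
    ⟪v, fderiv ℝ (gradient (f ∘ g)) u v⟫_ℝ = ⟪J v, fderiv ℝ (gradient f) (g u) (J v)⟫_ℝ := by
  have hgrad : gradient (f ∘ g) = J† ∘ gradient f ∘ g := funext fun u =>
    gradient_comp_of_hasFDerivAt (hg u) (hf.differentiable (by norm_num) _)
  have hD := (J†).hasFDerivAt.comp u
    ((((hf.gradient (by norm_num)).differentiable one_ne_zero (g u)).hasFDerivAt).comp u (hg u))
  rw [hgrad, hD.fderiv]
  exact ContinuousLinearMap.adjoint_inner_right J v _

end Composition

theorem inner_add_apply_add_le_two_mul {G : Type*} [NormedAddCommGroup G]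
    [InnerProductSpace ℝ G] {M : G →L[ℝ] G} (hM : ∀ z, 0 ≤ ⟪z, M z⟫_ℝ) (u w : G) :
    ⟪u + w, M (u + w)⟫_ℝ ≤ 2 * (⟪u, M u⟫_ℝ + ⟪w, M w⟫_ℝ) := by
  have := hM (u - w)
  simp only [map_add, map_sub, inner_add_left, inner_add_right, inner_sub_left,
    inner_sub_right] at this ⊢
  linarith

theorem inner_smul_sub_mul_norm_smul_sq {G : Type*} [NormedAddCommGroup G]
    [InnerProductSpace ℝ G] {L : ℝ} (hL : L ≠ 0) (u : G) :
    ⟪u, (2 * L)⁻¹ • u⟫_ℝ - L * ‖(2 * L)⁻¹ • u‖ ^ 2 = 1 / (4 * L) * ‖u‖ ^ 2 := by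
  rw [real_inner_smul_right, real_inner_self_eq_norm_sq, norm_smul, mul_pow, Real.norm_eq_abs,
    sq_abs]
  field_simp
  ring

section Product

variable {E₁ E₂ : Type*} [NormedAddCommGroup E₁] [InnerProductSpace ℝ E₁]
  [NormedAddCommGroup E₂] [InnerProductSpace ℝ E₂]

namespace WithLp

variable (E₁ E₂) in
def inlL : E₁ →L[ℝ] WithLp 2 (E₁ × E₂) :=
  (prodContinuousLinearEquiv 2 ℝ E₁ E₂).symm.toContinuousLinearMap ∘L .inl ℝ E₁ E₂

variable (E₁ E₂) in
def inrL : E₂ →L[ℝ] WithLp 2 (E₁ × E₂) :=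
  (prodContinuousLinearEquiv 2 ℝ E₁ E₂).symm.toContinuousLinearMap ∘L .inr ℝ E₁ E₂

@[simp]
theorem inlL_apply (x : E₁) : inlL E₁ E₂ x = toLp 2 (x, 0) := rfl

@[simp]
theorem inrL_apply (y : E₂) : inrL E₁ E₂ y = toLp 2 (0, y) := rfl

theorem hasFDerivAt_toLp_left (y : E₂) (x : E₁) :
    HasFDerivAt (fun u => toLp 2 (u, y)) (inlL E₁ E₂) x :=
  (prodContinuousLinearEquiv 2 ℝ E₁ E₂).symm.hasFDerivAt.comp x
    ((hasFDerivAt_id x).prodMk (hasFDerivAt_const y x))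

theorem hasFDerivAt_toLp_right (x : E₁) (y : E₂) :
    HasFDerivAt (fun u => toLp 2 (x, u)) (inrL E₁ E₂) y :=
  (prodContinuousLinearEquiv 2 ℝ E₁ E₂).symm.hasFDerivAt.comp y
    ((hasFDerivAt_const x y).prodMk (hasFDerivAt_id y))

end WithLp

variable [CompleteSpace E₁] [CompleteSpace E₂]

theorem WithLp.adjoint_inlL : (inlL E₁ E₂)† = fstL 2 ℝ E₁ E₂ :=
  ((ContinuousLinearMap.eq_adjoint_iff _ _).2 fun _ _ => by simp).symm

theorem WithLp.adjoint_inrL : (inrL E₁ E₂)† = sndL 2 ℝ E₁ E₂ :=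
  ((ContinuousLinearMap.eq_adjoint_iff _ _).2 fun _ _ => by simp).symm

open WithLp

variable {F : WithLp 2 (E₁ × E₂) → ℝ}

theorem gradient_comp_toLp_left {x : E₁} {y : E₂} (hF : DifferentiableAt ℝ F (toLp 2 (x, y))) :
    gradient (fun u => F (toLp 2 (u, y))) x = (gradient F (toLp 2 (x, y))).ofLp.1 := by
  have := gradient_comp_of_hasFDerivAt (hasFDerivAt_toLp_left y x) hF
  rw [adjoint_inlL] at this
  exact this

theorem gradient_comp_toLp_right {x : E₁} {y : E₂} (hF : DifferentiableAt ℝ F (toLp 2 (x, y))) :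
    gradient (fun u => F (toLp 2 (x, u))) y = (gradient F (toLp 2 (x, y))).ofLp.2 := by
  have := gradient_comp_of_hasFDerivAt (hasFDerivAt_toLp_right x y) hF
  rw [adjoint_inrL] at this
  exact this

theorem ConvexOn.inner_fderiv_gradient_le_two_mul (hconv : ConvexOn ℝ univ F)
    (hF : ContDiff ℝ 2 F) {L₁ L₂ : ℝ}
    (h₁ : ∀ (x : E₁) (y : E₂) (v : E₁),
      ⟪v, fderiv ℝ (gradient fun u => F (toLp 2 (u, y))) x v⟫_ℝ ≤ L₁ * ‖v‖ ^ 2)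
    (h₂ : ∀ (x : E₁) (y : E₂) (v : E₂),
      ⟪v, fderiv ℝ (gradient fun u => F (toLp 2 (x, u))) y v⟫_ℝ ≤ L₂ * ‖v‖ ^ 2)
    (p v : WithLp 2 (E₁ × E₂)) :
    ⟪v, fderiv ℝ (gradient F) p v⟫_ℝ ≤ 2 * (L₁ * ‖v.ofLp.1‖ ^ 2 + L₂ * ‖v.ofLp.2‖ ^ 2) := by
  set M := fderiv ℝ (gradient F) p
  have hblock₁ : ⟪inlL E₁ E₂ v.ofLp.1, M (inlL E₁ E₂ v.ofLp.1)⟫_ℝ ≤ L₁ * ‖v.ofLp.1‖ ^ 2 :=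
    (inner_fderiv_gradient_comp hF (hasFDerivAt_toLp_left p.ofLp.2) _ _).symm.trans_le
      (h₁ _ _ _)
  have hblock₂ : ⟪inrL E₁ E₂ v.ofLp.2, M (inrL E₁ E₂ v.ofLp.2)⟫_ℝ ≤ L₂ * ‖v.ofLp.2‖ ^ 2 :=
    (inner_fderiv_gradient_comp hF (hasFDerivAt_toLp_right p.ofLp.1) _ _).symm.trans_le
      (h₂ _ _ _)
  have hv : v = inlL E₁ E₂ v.ofLp.1 + inrL E₁ E₂ v.ofLp.2 := by
    simp only [inlL_apply, inrL_apply, ← toLp_add, Prod.mk_add_mk, add_zero, zero_add]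
  have hsplit := inner_add_apply_add_le_two_mul (hconv.inner_fderiv_gradient_nonneg hF p)
    (inlL E₁ E₂ v.ofLp.1) (inrL E₁ E₂ v.ofLp.2)
  rw [← hv] at hsplit
  linarith

theorem ConvexOn.le_bregmanDiv (hconv : ConvexOn ℝ univ F) (hF : ContDiff ℝ 2 F) {L₁ L₂ : ℝ}
    (hL₁ : L₁ ≠ 0) (hL₂ : L₂ ≠ 0)
    (hess : ∀ p v : WithLp 2 (E₁ × E₂),
      ⟪v, fderiv ℝ (gradient F) p v⟫_ℝ ≤ 2 * (L₁ * ‖v.ofLp.1‖ ^ 2 + L₂ * ‖v.ofLp.2‖ ^ 2))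
    (p q : WithLp 2 (E₁ × E₂)) :
    1 / (4 * L₁) * ‖(gradient F p).ofLp.1 - (gradient F q).ofLp.1‖ ^ 2
      + 1 / (4 * L₂) * ‖(gradient F p).ofLp.2 - (gradient F q).ofLp.2‖ ^ 2
      ≤ bregmanDiv F p q := by
  set g₁ := (gradient F q).ofLp.1 - (gradient F p).ofLp.1
  set g₂ := (gradient F q).ofLp.2 - (gradient F p).ofLp.2
  have key := hconv.inner_sub_half_le_bregmanDiv hF p q
    (toLp 2 ((2 * L₁)⁻¹ • g₁, (2 * L₂)⁻¹ • g₂)) fun _ _ => hess _ _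
  simp only [prod_inner_apply, ofLp_sub, Prod.fst_sub, Prod.snd_sub] at key
  rw [norm_sub_rev, norm_sub_rev (gradient F p).ofLp.2, ← inner_smul_sub_mul_norm_smul_sq hL₁,
    ← inner_smul_sub_mul_norm_smul_sq hL₂]
  linarith

end Product

/-- Lemma 16 of the paper.  Let `H` be `C²` and jointly convex on
`ℝ^{d_x} × ℝ^{d_y}` with diagonal Hessian blocks `∇²_{xx}H ⪯ L_x I` and `∇²_{yy}H ⪯ L_y I`.
Then (i) the full Hessian satisfies `∇²H ⪯ 2 diag(L_x I, L_y I)`, and (ii) the Bregman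
divergence of `H` dominates
`(1/(4L_x))‖∇_x H(x,y) − ∇_x H(x',y')‖² + (1/(4L_y))‖∇_y H(x,y) − ∇_y H(x',y')‖²`.
Positive semidefiniteness `A ⪯ B` is expressed via quadratic forms, the full Hessian of the
joint function on `WithLp 2 (ℝ^{d_x} × ℝ^{d_y})` being the derivative of its gradient. -/
theorem stmt19_hessian_block_bound
    (dx dy : ℕ) (Lx Ly : ℝ) (hLx : 0 < Lx) (hLy : 0 < Ly)
    (H : Vec dx → Vec dy → ℝ)
    (hC2 : ContDiff ℝ 2 (fun p : WithLp 2 (Vec dx × Vec dy) => H p.ofLp.1 p.ofLp.2))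
    (hconv : ConvexOn ℝ Set.univ (fun p : Vec dx × Vec dy => H p.1 p.2))
    -- ∇²_{xx} H(x,y) ⪯ Lx • I
    (hxx : ∀ (x : Vec dx) (y : Vec dy) (v : Vec dx),
      ⟪v, fderiv ℝ (fun x' => gradient (fun u => H u y) x') x v⟫_ℝ ≤ Lx * ‖v‖ ^ 2)
    -- ∇²_{yy} H(x,y) ⪯ Ly • I
    (hyy : ∀ (x : Vec dx) (y : Vec dy) (v : Vec dy),
      ⟪v, fderiv ℝ (fun y' => gradient (fun u => H x u) y') y v⟫_ℝ ≤ Ly * ‖v‖ ^ 2) :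
    -- (i) ∇²H(x,y) ⪯ 2 diag(Lx I, Ly I)
    (∀ (p v : WithLp 2 (Vec dx × Vec dy)),
      ⟪v, fderiv ℝ (gradient (fun q : WithLp 2 (Vec dx × Vec dy) => H q.ofLp.1 q.ofLp.2)) p v⟫_ℝ
        ≤ 2 * (Lx * ‖v.ofLp.1‖ ^ 2 + Ly * ‖v.ofLp.2‖ ^ 2))
    -- (ii) the Bregman divergence lower bound
    ∧ (∀ (x x' : Vec dx) (y y' : Vec dy),
        1 / (4 * Lx) * ‖gradient (fun u => H u y) x - gradient (fun u => H u y') x'‖ ^ 2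
          + 1 / (4 * Ly) * ‖gradient (fun u => H x u) y - gradient (fun u => H x' u) y'‖ ^ 2
        ≤ H x y - H x' y'
          - ⟪gradient (fun q : WithLp 2 (Vec dx × Vec dy) => H q.ofLp.1 q.ofLp.2)
                ((WithLp.equiv 2 _).symm (x', y')),
              (WithLp.equiv 2 _).symm (x, y) - (WithLp.equiv 2 _).symm (x', y')⟫_ℝ) := by
  set F := fun q : WithLp 2 (Vec dx × Vec dy) => H q.ofLp.1 q.ofLp.2
  have hFconv : ConvexOn ℝ univ F :=
    hconv.comp_linearMap (WithLp.linearEquiv 2 ℝ (Vec dx × Vec dy)).toLinearMap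
  have hess := hFconv.inner_fderiv_gradient_le_two_mul hC2 hxx hyy
  refine ⟨hess, fun x x' y y' => ?_⟩
  have hdiff := hC2.differentiable (by norm_num)
  have hgrad₁ (x : Vec dx) (y : Vec dy) :
      gradient (fun u => H u y) x = (gradient F (WithLp.toLp 2 (x, y))).ofLp.1 :=
    gradient_comp_toLp_left (hdiff _)
  have hgrad₂ (x : Vec dx) (y : Vec dy) :
      gradient (fun u => H x u) y = (gradient F (WithLp.toLp 2 (x, y))).ofLp.2 :=
    gradient_comp_toLp_right (hdiff _)
  rw [hgrad₁, hgrad₁, hgrad₂, hgrad₂]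
  exact hFconv.le_bregmanDiv hC2 hLx.ne' hLy.ne' hess _ _
end
end
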